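/- arXiv:1503.04221 — 6 statements merged into one kernel-verified Lean document; each statement's English description precedes it below -/
import Mathlib

section
/- Let V : E_n → ℝ be a symmetric pair interaction on [n] = {1,...,n}, with U(X) = Σ_{{i,j}⊆X} V_{ij} for X ⊆ [n]. Then the Ursell coefficient φ_β([n]) := Σ_{g connected graph on [n]} Π_{{i,j}∈E_g} (e^{-β V_{ij}} − 1) satisfies φ_β([n]) = Σ_{π partition of [n]} (−1)^{|π|−1} (|π|−1)! exp(−β Σ_{α∈π} U(α)). -/
open scoped Classical

/-- `U(X) = ∑_{{i,j} ⊆ X} V_{ij}`: the sum of `V` over non-diagonal unordered pairs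
whose endpoints both lie in `X`. -/
noncomputable def pairEnergy (n : ℕ) (V : Sym2 (Fin n) → ℝ) (X : Finset (Fin n)) : ℝ :=
  ∑ e ∈ Finset.univ.filter (fun e : Sym2 (Fin n) => ¬ e.IsDiag ∧ ∀ i ∈ e, i ∈ X), V e

/-- `g` is (the edge set of) a connected graph with vertex set `[n]`. -/
def isConnGraph (n : ℕ) (g : Finset (Sym2 (Fin n))) : Prop :=
  (∀ e ∈ g, ¬ e.IsDiag) ∧ (SimpleGraph.fromEdgeSet (↑g : Set (Sym2 (Fin n)))).Connected

/-- `π` is a set partition of `[n]`: its blocks are nonempty, pairwise disjoint and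
cover `[n]`. -/
def isSetPartition (n : ℕ) (π : Finset (Finset (Fin n))) : Prop :=
  (∀ B ∈ π, B.Nonempty) ∧ (∀ B ∈ π, ∀ C ∈ π, B ≠ C → Disjoint B C) ∧
    π.sup id = (Finset.univ : Finset (Fin n))

set_option linter.unusedSectionVars false

section Aux

variable {α : Type*} [Fintype α] [DecidableEq α]


def IsPart (X : Finset α) (π : Finset (Finset α)) : Prop :=
  (∀ B ∈ π, B.Nonempty) ∧ (∀ B ∈ π, ∀ C ∈ π, B ≠ C → Disjoint B C) ∧ π.sup id = X

noncomputable def Parts (X : Finset α) : Finset (Finset (Finset α)) :=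
  Finset.univ.filter (IsPart X)

lemma mem_Parts {X : Finset α} {π : Finset (Finset α)} : π ∈ Parts X ↔ IsPart X π := by
  simp [Parts]

lemma IsPart.block_subset {X : Finset α} {π : Finset (Finset α)} (h : IsPart X π)
    {B : Finset α} (hB : B ∈ π) : B ⊆ X := by
  rw [← h.2.2]; exact Finset.le_sup (f := id) hB

lemma Parts_empty : Parts (∅ : Finset α) = {∅} := by
  ext π
  simp only [mem_Parts, Finset.mem_singleton, IsPart]
  constructor
  · rintro ⟨h1, h2, h3⟩
    by_contra hne
    obtain ⟨B, hB⟩ := Finset.nonempty_iff_ne_empty.2 hne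
    obtain ⟨x, hx⟩ := h1 B hB
    have := (Finset.le_sup (f := id) hB).trans h3.le
    exact absurd (this hx) (by simp)
  · rintro rfl; refine ⟨by simp, by simp, by simp⟩

lemma IsPart.existsUnique {X : Finset α} {π : Finset (Finset α)} (h : IsPart X π)
    {a : α} (ha : a ∈ X) : ∃! B, B ∈ π ∧ a ∈ B := by
  rw [← h.2.2] at ha
  obtain ⟨B, hB, haB⟩ := Finset.mem_sup.1 ha
  refine ⟨B, ⟨hB, haB⟩, ?_⟩
  rintro C ⟨hC, haC⟩
  by_contra hne
  exact Finset.disjoint_left.1 (h.2.1 C hC B hB hne) haC haB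

lemma IsPart.erase {X : Finset α} {π : Finset (Finset α)} (h : IsPart X π)
    {B : Finset α} (hB : B ∈ π) : IsPart (X \ B) (π.erase B) := by
  refine ⟨fun C hC => h.1 C (Finset.mem_of_mem_erase hC),
    fun C hC D hD => h.2.1 C (Finset.mem_of_mem_erase hC) D (Finset.mem_of_mem_erase hD), ?_⟩
  apply Finset.Subset.antisymm
  · intro x hx
    obtain ⟨C, hC, hxC⟩ := Finset.mem_sup.1 hx
    have hCπ := Finset.mem_of_mem_erase hC
    refine Finset.mem_sdiff.2 ⟨h.block_subset hCπ hxC, fun hxB => ?_⟩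
    exact Finset.disjoint_left.1 (h.2.1 C hCπ B hB (Finset.ne_of_mem_erase hC)) hxC hxB
  · intro x hx
    obtain ⟨hxX, hxB⟩ := Finset.mem_sdiff.1 hx
    obtain ⟨C, ⟨hC, hxC⟩, -⟩ := h.existsUnique hxX
    have : C ≠ B := fun e => hxB (e ▸ hxC)
    exact Finset.mem_sup.2 ⟨C, Finset.mem_erase.2 ⟨this, hC⟩, hxC⟩

lemma IsPart.not_mem {X : Finset α} {B : Finset α} {τ : Finset (Finset α)}
    (hτ : IsPart (X \ B) τ) (hBne : B.Nonempty) : B ∉ τ := by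
  intro hB
  obtain ⟨x, hx⟩ := hBne
  have := hτ.block_subset hB hx
  simp at this
  exact this.2 hx

lemma IsPart.insert {X : Finset α} {B : Finset α} {τ : Finset (Finset α)}
    (hτ : IsPart (X \ B) τ) (hBne : B.Nonempty) (hBX : B ⊆ X) :
    IsPart X (insert B τ) := by
  refine ⟨?_, ?_, ?_⟩
  · intro C hC
    rcases Finset.mem_insert.1 hC with rfl | hC
    · exact hBne
    · exact hτ.1 C hC
  · intro C hC D hD hne
    rcases Finset.mem_insert.1 hC with rfl | hC'
    · rcases Finset.mem_insert.1 hD with rfl | hD'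
      · exact absurd rfl hne
      · exact Finset.disjoint_sdiff.mono_right (hτ.block_subset hD')
    · rcases Finset.mem_insert.1 hD with rfl | hD'
      · exact (Finset.disjoint_sdiff.mono_right (hτ.block_subset hC')).symm
      · exact hτ.2.1 C hC' D hD' hne
  · rw [Finset.sup_insert, hτ.2.2]
    simp only [id_eq, Finset.sup_eq_union]
    exact Finset.union_sdiff_of_subset hBX

set_option linter.unusedSectionVars false

lemma master (X : Finset α) (f : Finset α → Finset (Finset α) → ℝ) :
    ∑ π ∈ Parts X, ∑ B ∈ π, f B (π.erase B)
      = ∑ B ∈ X.powerset.filter Finset.Nonempty, ∑ τ ∈ Parts (X \ B), f B τ := by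
  rw [← Finset.sum_sigma (Parts X) (fun π => π) (fun p => f p.2 (p.1.erase p.2)),
      ← Finset.sum_sigma (X.powerset.filter Finset.Nonempty) (fun B => Parts (X \ B))
        (fun q => f q.1 q.2)]
  refine Finset.sum_nbij' (fun p => ⟨p.2, p.1.erase p.2⟩) (fun q => ⟨insert q.1 q.2, q.1⟩)
    ?_ ?_ ?_ ?_ ?_
  · rintro ⟨π, B⟩ hp
    rw [Finset.mem_sigma] at hp
    obtain ⟨hπ, hB⟩ := hp
    rw [mem_Parts] at hπ
    refine Finset.mem_sigma.2 ⟨Finset.mem_filter.2 ⟨Finset.mem_powerset.2 (hπ.block_subset hB),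
      hπ.1 B hB⟩, mem_Parts.2 (hπ.erase hB)⟩
  · rintro ⟨B, τ⟩ hq
    rw [Finset.mem_sigma] at hq
    obtain ⟨hB, hτ⟩ := hq
    rw [Finset.mem_filter, Finset.mem_powerset] at hB
    rw [mem_Parts] at hτ
    exact Finset.mem_sigma.2 ⟨mem_Parts.2 (hτ.insert hB.2 hB.1), Finset.mem_insert_self _ _⟩
  · rintro ⟨π, B⟩ hp
    rw [Finset.mem_sigma] at hp
    simp only [Sigma.mk.inj_iff, heq_eq_eq]
    exact ⟨Finset.insert_erase hp.2, trivial⟩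
  · rintro ⟨B, τ⟩ hq
    rw [Finset.mem_sigma] at hq
    obtain ⟨hB, hτ⟩ := hq
    rw [Finset.mem_filter, Finset.mem_powerset] at hB
    rw [mem_Parts] at hτ
    simp only [Sigma.mk.inj_iff, heq_eq_eq]
    exact ⟨trivial, Finset.erase_insert (hτ.not_mem hB.2)⟩
  · rintro ⟨π, B⟩ _; rfl

lemma sdiff_invol_sum (X : Finset α) (g : Finset α → ℝ) :
    ∑ B ∈ X.powerset, g (X \ B) = ∑ B ∈ X.powerset, g B := by
  refine Finset.sum_nbij' (fun B => X \ B) (fun B => X \ B) ?_ ?_ ?_ ?_ ?_ <;>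
    simp +contextual [Finset.mem_powerset, Finset.sdiff_sdiff_eq_self]

lemma O_val (X : Finset α) :
    ∑ π ∈ Parts X, (-1 : ℝ) ^ π.card * (Nat.factorial π.card : ℝ) = (-1) ^ X.card := by
  induction X using Finset.strongInduction with
  | _ X IH =>
  rcases X.eq_empty_or_nonempty with rfl | hX
  · simp [Parts_empty]
  · have key : ∀ π ∈ Parts X, (-1 : ℝ) ^ π.card * (Nat.factorial π.card : ℝ)
        = ∑ B ∈ π, (-1 : ℝ) ^ ((π.erase B).card + 1) * (Nat.factorial (π.erase B).card : ℝ) := by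
      intro π hπ
      rw [mem_Parts] at hπ
      have hπne : π.Nonempty := by
        rcases π.eq_empty_or_nonempty with rfl | h
        · exfalso; rw [IsPart] at hπ; simp at hπ
          exact hX.ne_empty hπ.symm
        · exact h
      have hcard : ∀ B ∈ π, (π.erase B).card = π.card - 1 := fun B hB =>
        Finset.card_erase_of_mem hB
      rw [Finset.sum_congr rfl (fun B hB => by rw [hcard B hB])]
      rw [Finset.sum_const, nsmul_eq_mul]
      have h1 : 1 ≤ π.card := Finset.card_pos.2 hπne
      have : π.card - 1 + 1 = π.card := Nat.succ_pred_eq_of_pos h1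
      rw [this]
      have : (Nat.factorial π.card : ℝ) = (π.card : ℝ) * (Nat.factorial (π.card - 1) : ℝ) := by
        rw [← Nat.cast_mul]
        congr 1
        conv_lhs => rw [← this, Nat.factorial_succ, this]
      rw [this]; ring
    rw [Finset.sum_congr rfl key, master X
      (fun B τ => (-1 : ℝ) ^ (τ.card + 1) * (Nat.factorial τ.card : ℝ))]
    have step : ∀ B ∈ X.powerset.filter Finset.Nonempty,
        ∑ τ ∈ Parts (X \ B), (-1 : ℝ) ^ (τ.card + 1) * (Nat.factorial τ.card : ℝ)
          = -(-1 : ℝ) ^ (X \ B).card := by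
      intro B hB
      rw [Finset.mem_filter, Finset.mem_powerset] at hB
      have hss : X \ B ⊂ X := Finset.sdiff_ssubset hB.1 hB.2
      rw [← IH _ hss]
      rw [← Finset.sum_neg_distrib]
      exact Finset.sum_congr rfl fun τ _ => by ring
    rw [Finset.sum_congr rfl step]
    have hfe : X.powerset.filter Finset.Nonempty = X.powerset.erase ∅ := by
      ext B; simp [Finset.nonempty_iff_ne_empty, and_comm]
    have hmem : (∅ : Finset α) ∈ X.powerset := Finset.empty_mem_powerset X
    have hsplit : (-1 : ℝ) ^ (X \ ∅).card + ∑ B ∈ X.powerset.erase ∅, (-1 : ℝ) ^ (X \ B).card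
        = ∑ B ∈ X.powerset, (-1 : ℝ) ^ (X \ B).card :=
      Finset.add_sum_erase _ (fun B => (-1 : ℝ) ^ (X \ B).card) hmem
    have hzero : ∑ B ∈ X.powerset, (-1 : ℝ) ^ (X \ B).card = 0 := by
      rw [sdiff_invol_sum X (fun B => (-1 : ℝ) ^ B.card)]
      have hz := Finset.sum_powerset_neg_one_pow_card (x := X)
      rw [if_neg hX.ne_empty] at hz
      calc ∑ B ∈ X.powerset, (-1 : ℝ) ^ B.card
          = ((∑ B ∈ X.powerset, (-1 : ℤ) ^ B.card : ℤ) : ℝ) := by push_cast; rfl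
        _ = 0 := by rw [hz]; simp
    rw [hfe, Finset.sum_neg_distrib]
    rw [Finset.sdiff_empty] at hsplit
    linarith [hsplit, hzero]

lemma neg_one_pow_powerset_sum (Y : Finset α) :
    ∑ B ∈ Y.powerset, (-1 : ℝ) ^ B.card = if Y = ∅ then 1 else 0 := by
  have hz := Finset.sum_powerset_neg_one_pow_card (x := Y)
  calc ∑ B ∈ Y.powerset, (-1 : ℝ) ^ B.card
      = ((∑ B ∈ Y.powerset, (-1 : ℤ) ^ B.card : ℤ) : ℝ) := by push_cast; rfl
    _ = _ := by rw [hz]; split <;> simp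

lemma P_val (X : Finset α) (hX : X.Nonempty) :
    ∑ π ∈ Parts X, (-1 : ℝ) ^ (π.card - 1) * (Nat.factorial (π.card - 1) : ℝ)
      = if X.card = 1 then 1 else 0 := by
  obtain ⟨a, ha⟩ := hX
  have key : ∀ π ∈ Parts X, (-1 : ℝ) ^ (π.card - 1) * (Nat.factorial (π.card - 1) : ℝ)
      = ∑ B ∈ π, (if a ∈ B then
          (-1 : ℝ) ^ (π.erase B).card * (Nat.factorial (π.erase B).card : ℝ) else 0) := by
    intro π hπ
    rw [mem_Parts] at hπ
    obtain ⟨B₀, ⟨hB₀, haB₀⟩, huniq⟩ := hπ.existsUnique ha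
    rw [Finset.sum_eq_single B₀ ?_ ?_]
    · rw [if_pos haB₀, Finset.card_erase_of_mem hB₀]
    · intro B hB hne
      rw [if_neg]
      intro haB
      exact hne (huniq B ⟨hB, haB⟩)
    · intro h; exact absurd hB₀ h
  rw [Finset.sum_congr rfl key, master X
    (fun B τ => if a ∈ B then (-1 : ℝ) ^ τ.card * (Nat.factorial τ.card : ℝ) else 0)]
  have step : ∀ B ∈ X.powerset.filter Finset.Nonempty,
      (∑ τ ∈ Parts (X \ B),
        if a ∈ B then (-1 : ℝ) ^ τ.card * (Nat.factorial τ.card : ℝ) else 0)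
        = if a ∈ B then (-1 : ℝ) ^ (X \ B).card else 0 := by
    intro B hB
    by_cases h : a ∈ B
    · simp only [if_pos h]; exact O_val (X \ B)
    · simp [h]
  rw [Finset.sum_congr rfl step, ← Finset.sum_filter]
  have hff : (X.powerset.filter Finset.Nonempty).filter (fun B => a ∈ B)
      = X.powerset.filter (fun B => a ∈ B) := by
    ext B
    simp only [Finset.mem_filter, Finset.mem_powerset, and_assoc]
    constructor
    · rintro ⟨h1, -, h3⟩; exact ⟨h1, h3⟩
    · rintro ⟨h1, h3⟩; exact ⟨h1, ⟨a, h3⟩, h3⟩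
  rw [hff]
  have hbij : ∑ B ∈ X.powerset.filter (fun B => a ∈ B), (-1 : ℝ) ^ (X \ B).card
      = ∑ B ∈ (X.erase a).powerset, (-1 : ℝ) ^ B.card := by
    refine Finset.sum_nbij' (fun B => X \ B) (fun B => X \ B) ?_ ?_ ?_ ?_ ?_
    · intro B hB
      rw [Finset.mem_filter, Finset.mem_powerset] at hB
      rw [Finset.mem_powerset]
      intro x hx
      rw [Finset.mem_sdiff] at hx
      exact Finset.mem_erase.2 ⟨fun e => hx.2 (e ▸ hB.2), hx.1⟩
    · intro B hB
      rw [Finset.mem_powerset] at hB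
      rw [Finset.mem_filter, Finset.mem_powerset]
      refine ⟨Finset.sdiff_subset, Finset.mem_sdiff.2 ⟨ha, fun haB => ?_⟩⟩
      exact (Finset.mem_erase.1 (hB haB)).1 rfl
    · intro B hB
      rw [Finset.mem_filter, Finset.mem_powerset] at hB
      exact Finset.sdiff_sdiff_eq_self hB.1
    · intro B hB
      rw [Finset.mem_powerset] at hB
      exact Finset.sdiff_sdiff_eq_self (hB.trans (Finset.erase_subset _ _))
    · intro B _; rfl
  rw [hbij, neg_one_pow_powerset_sum]
  have : X.erase a = ∅ ↔ X.card = 1 := by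
    rw [← Finset.card_eq_zero, Finset.card_erase_of_mem ha]
    have h1 : 1 ≤ X.card := Finset.card_pos.2 ⟨a, ha⟩
    omega
  rw [if_congr this rfl rfl]

def Coarser (σ π : Finset (Finset α)) : Prop := ∀ C ∈ σ, ∃ B ∈ π, C ⊆ B

lemma filter_sup_eq {X : Finset α} {σ : Finset (Finset α)} (hσ : IsPart X σ)
    {τ : Finset (Finset (Finset α))} (hτ : IsPart σ τ) {b : Finset (Finset α)} (hb : b ∈ τ) :
    σ.filter (fun C => C ⊆ b.sup id) = b := by
  apply Finset.Subset.antisymm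
  · intro C hC
    rw [Finset.mem_filter] at hC
    obtain ⟨hCσ, hCs⟩ := hC
    obtain ⟨x, hx⟩ := hσ.1 C hCσ
    obtain ⟨D, hDb, hxD⟩ := Finset.mem_sup.1 (hCs hx)
    have hDσ : D ∈ σ := hτ.block_subset hb hDb
    by_cases hCD : C = D
    · exact hCD ▸ hDb
    · exact absurd (Finset.disjoint_left.1 (hσ.2.1 C hCσ D hDσ hCD) hx hxD) (fun h => h)
  · intro C hCb
    exact Finset.mem_filter.2 ⟨hτ.block_subset hb hCb, Finset.le_sup (f := id) hCb⟩

lemma coarse_mk {X : Finset α} {σ : Finset (Finset α)} (hσ : IsPart X σ)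
    {τ : Finset (Finset (Finset α))} (hτ : IsPart σ τ) :
    IsPart X (τ.image (fun b => b.sup id)) ∧ Coarser σ (τ.image (fun b => b.sup id))
      ∧ (τ.image (fun b => b.sup id)).card = τ.card := by
  have hinj : ∀ b ∈ τ, ∀ b' ∈ τ, b.sup id = b'.sup id → b = b' := by
    intro b hb b' hb' h
    rw [← filter_sup_eq hσ hτ hb, ← filter_sup_eq hσ hτ hb', h]
  have hcoarse : Coarser σ (τ.image (fun b => b.sup id)) := by
    intro C hC
    have : C ∈ τ.sup id := hτ.2.2 ▸ hC
    obtain ⟨b, hb, hCb⟩ := Finset.mem_sup.1 this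
    exact ⟨b.sup id, Finset.mem_image_of_mem _ hb, Finset.le_sup (f := id) hCb⟩
  refine ⟨⟨?_, ?_, ?_⟩, hcoarse, Finset.card_image_of_injOn (fun b hb b' hb' => hinj b hb b' hb')⟩
  · intro B hB
    obtain ⟨b, hb, rfl⟩ := Finset.mem_image.1 hB
    obtain ⟨C, hCb⟩ := hτ.1 b hb
    obtain ⟨x, hx⟩ := hσ.1 C (hτ.block_subset hb hCb)
    exact ⟨x, Finset.mem_sup.2 ⟨C, hCb, hx⟩⟩
  · intro B hB B' hB' hne
    obtain ⟨b, hb, rfl⟩ := Finset.mem_image.1 hB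
    obtain ⟨b', hb', rfl⟩ := Finset.mem_image.1 hB'
    have hbne : b ≠ b' := fun e => hne (e ▸ rfl)
    rw [Finset.disjoint_left]
    intro x hx hx'
    obtain ⟨C, hCb, hxC⟩ := Finset.mem_sup.1 hx
    obtain ⟨C', hCb', hxC'⟩ := Finset.mem_sup.1 hx'
    have hCne : C ≠ C' := by
      intro e
      exact Finset.disjoint_left.1 (hτ.2.1 b hb b' hb' hbne) hCb (e ▸ hCb')
    exact Finset.disjoint_left.1
      (hσ.2.1 C (hτ.block_subset hb hCb) C' (hτ.block_subset hb' hCb') hCne) hxC hxC'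
  · apply Finset.Subset.antisymm
    · intro x hx
      obtain ⟨B, hB, hxB⟩ := Finset.mem_sup.1 hx
      obtain ⟨b, hb, rfl⟩ := Finset.mem_image.1 hB
      obtain ⟨C, hCb, hxC⟩ := Finset.mem_sup.1 hxB
      exact hσ.block_subset (hτ.block_subset hb hCb) hxC
    · intro x hx
      obtain ⟨C, hCσ, hxC⟩ := Finset.mem_sup.1 (hσ.2.2 ▸ hx : x ∈ σ.sup id)
      obtain ⟨b, hb, hCb⟩ := Finset.mem_sup.1 (hτ.2.2 ▸ hCσ : C ∈ τ.sup id)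
      exact Finset.mem_sup.2 ⟨b.sup id, Finset.mem_image_of_mem _ hb,
        (Finset.le_sup (f := id) hCb : C ⊆ b.sup id) hxC⟩

lemma block_filter_aux {X : Finset α} {σ π : Finset (Finset α)} (hσ : IsPart X σ)
    (hπ : IsPart X π) (hc : Coarser σ π) {B : Finset α} (hB : B ∈ π) :
    ∀ x ∈ B, ∃ C ∈ σ, x ∈ C ∧ C ⊆ B := by
  intro x hxB
  have hxX : x ∈ X := hπ.block_subset hB hxB
  obtain ⟨C, ⟨hCσ, hxC⟩, -⟩ := hσ.existsUnique hxX
  obtain ⟨B', hB', hCB'⟩ := hc C hCσ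
  have : B = B' := by
    by_contra hne
    exact Finset.disjoint_left.1 (hπ.2.1 B hB B' hB' hne) hxB (hCB' hxC)
  exact ⟨C, hCσ, hxC, this ▸ hCB'⟩

lemma coarse_inv {X : Finset α} {σ π : Finset (Finset α)} (hσ : IsPart X σ)
    (hπ : IsPart X π) (hc : Coarser σ π) :
    IsPart σ (π.image (fun B => σ.filter (fun C => C ⊆ B)))
      ∧ (π.image (fun B => σ.filter (fun C => C ⊆ B))).image (fun b => b.sup id) = π := by
  have hsup : ∀ B ∈ π, (σ.filter (fun C => C ⊆ B)).sup id = B := by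
    intro B hB
    apply Finset.Subset.antisymm
    · intro x hx
      obtain ⟨C, hC, hxC⟩ := Finset.mem_sup.1 hx
      exact (Finset.mem_filter.1 hC).2 hxC
    · intro x hxB
      obtain ⟨C, hCσ, hxC, hCB⟩ := block_filter_aux hσ hπ hc hB x hxB
      exact Finset.mem_sup.2 ⟨C, Finset.mem_filter.2 ⟨hCσ, hCB⟩, hxC⟩
  constructor
  · refine ⟨?_, ?_, ?_⟩
    · intro b hb
      obtain ⟨B, hB, rfl⟩ := Finset.mem_image.1 hb
      obtain ⟨x, hxB⟩ := hπ.1 B hB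
      obtain ⟨C, hCσ, hxC, hCB⟩ := block_filter_aux hσ hπ hc hB x hxB
      exact ⟨C, Finset.mem_filter.2 ⟨hCσ, hCB⟩⟩
    · intro b hb b' hb' hne
      obtain ⟨B, hB, rfl⟩ := Finset.mem_image.1 hb
      obtain ⟨B', hB', rfl⟩ := Finset.mem_image.1 hb'
      have hBne : B ≠ B' := fun e => hne (e ▸ rfl)
      rw [Finset.disjoint_left]
      intro C hC hC'
      rw [Finset.mem_filter] at hC hC'
      obtain ⟨x, hx⟩ := hσ.1 C hC.1
      exact Finset.disjoint_left.1 (hπ.2.1 B hB B' hB' hBne) (hC.2 hx) (hC'.2 hx)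
    · apply Finset.Subset.antisymm
      · intro C hC
        obtain ⟨b, hb, hCb⟩ := Finset.mem_sup.1 hC
        obtain ⟨B, hB, rfl⟩ := Finset.mem_image.1 hb
        exact (Finset.mem_filter.1 hCb).1
      · intro C hCσ
        obtain ⟨B, hB, hCB⟩ := hc C hCσ
        exact Finset.mem_sup.2 ⟨σ.filter (fun C => C ⊆ B), Finset.mem_image_of_mem _ hB,
          Finset.mem_filter.2 ⟨hCσ, hCB⟩⟩
  · rw [Finset.image_image]
    calc π.image ((fun b => Finset.sup b id) ∘ fun B => σ.filter (fun C => C ⊆ B))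
        = π.image id := Finset.image_congr (fun B hB => hsup B hB)
      _ = π := Finset.image_id

lemma coarsen_sum (X : Finset α) (hX : X.Nonempty) (σ : Finset (Finset α)) (hσ : IsPart X σ) :
    ∑ π ∈ (Parts X).filter (Coarser σ),
        (-1 : ℝ) ^ (π.card - 1) * (Nat.factorial (π.card - 1) : ℝ)
      = if σ.card = 1 then 1 else 0 := by
  have hσne : σ.Nonempty := by
    rcases σ.eq_empty_or_nonempty with rfl | h
    · exfalso; exact hX.ne_empty (hσ.2.2.symm ▸ rfl : X = (∅ : Finset (Finset α)).sup id)
    · exact h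
  rw [← P_val σ hσne]
  refine Finset.sum_nbij' (fun π => π.image (fun B => σ.filter (fun C => C ⊆ B)))
    (fun τ => τ.image (fun b => b.sup id)) ?_ ?_ ?_ ?_ ?_
  · intro π hπ
    rw [Finset.mem_filter, mem_Parts] at hπ
    exact mem_Parts.2 (coarse_inv hσ hπ.1 hπ.2).1
  · intro τ hτ
    rw [mem_Parts] at hτ
    obtain ⟨h1, h2, -⟩ := coarse_mk hσ hτ
    exact Finset.mem_filter.2 ⟨mem_Parts.2 h1, h2⟩
  · intro π hπ
    rw [Finset.mem_filter, mem_Parts] at hπ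
    exact (coarse_inv hσ hπ.1 hπ.2).2
  · intro τ hτ
    rw [mem_Parts] at hτ
    obtain ⟨h1, h2, -⟩ := coarse_mk hσ hτ
    calc (τ.image (fun b => b.sup id)).image (fun B => σ.filter (fun C => C ⊆ B))
        = τ.image ((fun B => σ.filter (fun C => C ⊆ B)) ∘ (fun b => b.sup id)) :=
          Finset.image_image
      _ = τ.image id := Finset.image_congr (fun b hb => filter_sup_eq hσ hτ hb)
      _ = τ := Finset.image_id
  · intro π hπ
    rw [Finset.mem_filter, mem_Parts] at hπ
    have hτ := (coarse_inv hσ hπ.1 hπ.2).1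
    have := (coarse_mk hσ hτ).2.2
    rw [(coarse_inv hσ hπ.1 hπ.2).2] at this
    rw [← this]

end Aux

noncomputable def blockEdges (n : ℕ) (π : Finset (Finset (Fin n))) : Finset (Sym2 (Fin n)) :=
  π.biUnion (fun B => Finset.univ.filter
    (fun e : Sym2 (Fin n) => ¬ e.IsDiag ∧ ∀ i ∈ e, i ∈ B))

lemma mem_blockEdges {n : ℕ} {π : Finset (Finset (Fin n))} {e : Sym2 (Fin n)} :
    e ∈ blockEdges n π ↔ ¬ e.IsDiag ∧ ∃ B ∈ π, ∀ i ∈ e, i ∈ B := by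
  simp only [blockEdges, Finset.mem_biUnion, Finset.mem_filter, Finset.mem_univ, true_and]
  tauto

lemma energy_eq {n : ℕ} (V : Sym2 (Fin n) → ℝ) {π : Finset (Finset (Fin n))}
    (hπ : IsPart Finset.univ π) :
    ∑ B ∈ π, pairEnergy n V B = ∑ e ∈ blockEdges n π, V e := by
  have hdisj : (↑π : Set (Finset (Fin n))).PairwiseDisjoint (fun B =>
      Finset.univ.filter (fun e : Sym2 (Fin n) => ¬ e.IsDiag ∧ ∀ i ∈ e, i ∈ B)) := by
    intro B hB C hC hne
    simp only [Finset.mem_coe] at hB hC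
    rw [Function.onFun, Finset.disjoint_left]
    intro e he he'
    rw [Finset.mem_filter] at he he'
    obtain ⟨i, hi⟩ : ∃ i, i ∈ e := e.inductionOn (fun x y => ⟨x, Sym2.mem_mk_left x y⟩)
    exact Finset.disjoint_left.1 (hπ.2.1 B hB C hC hne) (he.2.2 i hi) (he'.2.2 i hi)
  rw [blockEdges, Finset.sum_biUnion hdisj]
  rfl

noncomputable def compPart (n : ℕ) (S : Finset (Sym2 (Fin n))) : Finset (Finset (Fin n)) :=
  Finset.univ.image (fun v => Finset.univ.filter
    (fun w => (SimpleGraph.fromEdgeSet (↑S : Set (Sym2 (Fin n)))).Reachable v w))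

lemma exp_expand {n : ℕ} (β : ℝ) (V : Sym2 (Fin n) → ℝ) {π : Finset (Finset (Fin n))}
    (hπ : IsPart Finset.univ π) :
    Real.exp (-β * ∑ B ∈ π, pairEnergy n V B)
      = ∑ T ∈ (blockEdges n π).powerset, ∏ e ∈ T, (Real.exp (-β * V e) - 1) := by
  rw [energy_eq V hπ, Finset.mul_sum, Real.exp_sum]
  have : ∀ e ∈ blockEdges n π, Real.exp (-β * V e) = (Real.exp (-β * V e) - 1) + 1 := by
    intro e _; ring
  rw [Finset.prod_congr rfl this, Finset.prod_add]
  exact Finset.sum_congr rfl fun T _ => by simp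

lemma isPart_compPart {n : ℕ} (S : Finset (Sym2 (Fin n))) :
    IsPart Finset.univ (compPart n S) := by
  set G := SimpleGraph.fromEdgeSet (↑S : Set (Sym2 (Fin n))) with hG
  refine ⟨?_, ?_, ?_⟩
  · intro B hB
    obtain ⟨v, -, rfl⟩ := Finset.mem_image.1 hB
    exact ⟨v, Finset.mem_filter.2 ⟨Finset.mem_univ v, SimpleGraph.Reachable.refl v⟩⟩
  · intro B hB C hC hne
    obtain ⟨v, -, rfl⟩ := Finset.mem_image.1 hB
    obtain ⟨w, -, rfl⟩ := Finset.mem_image.1 hC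
    rw [Finset.disjoint_left]
    intro x hx hx'
    rw [Finset.mem_filter] at hx hx'
    apply hne
    ext y
    simp only [Finset.mem_filter, Finset.mem_univ, true_and]
    constructor
    · intro h; exact (hx'.2.trans hx.2.symm).trans h
    · intro h; exact (hx.2.trans hx'.2.symm).trans h
  · apply Finset.Subset.antisymm (Finset.subset_univ _)
    intro v _
    exact Finset.mem_sup.2 ⟨_, Finset.mem_image_of_mem _ (Finset.mem_univ v),
      Finset.mem_filter.2 ⟨Finset.mem_univ v, SimpleGraph.Reachable.refl v⟩⟩

lemma reach_mem_block {n : ℕ} {S : Finset (Sym2 (Fin n))} {π : Finset (Finset (Fin n))}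
    (hπ : IsPart Finset.univ π) (hS : S ⊆ blockEdges n π) {B : Finset (Fin n)} (hB : B ∈ π)
    {v w : Fin n} (hv : v ∈ B)
    (h : (SimpleGraph.fromEdgeSet (↑S : Set (Sym2 (Fin n)))).Reachable v w) : w ∈ B := by
  rw [SimpleGraph.reachable_iff_reflTransGen] at h
  induction h with
  | refl => exact hv
  | tail h1 h2 ih =>
    rename_i b c
    rw [SimpleGraph.fromEdgeSet_adj] at h2
    have hbc : s(b, c) ∈ blockEdges n π := hS h2.1
    obtain ⟨-, B', hB', hmem⟩ := mem_blockEdges.1 hbc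
    have hbB' : b ∈ B' := hmem b (Sym2.mem_mk_left b c)
    have hcB' : c ∈ B' := hmem c (Sym2.mem_mk_right b c)
    have : B = B' := by
      by_contra hne
      exact Finset.disjoint_left.1 (hπ.2.1 B hB B' hB' hne) ih hbB'
    exact this ▸ hcB'

lemma subset_blockEdges_iff {n : ℕ} {S : Finset (Sym2 (Fin n))} {π : Finset (Finset (Fin n))}
    (hπ : IsPart Finset.univ π) (hnd : ∀ e ∈ S, ¬ e.IsDiag) :
    S ⊆ blockEdges n π ↔ Coarser (compPart n S) π := by
  constructor
  · intro hS C hC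
    obtain ⟨v, -, rfl⟩ := Finset.mem_image.1 hC
    obtain ⟨B, ⟨hB, hvB⟩, -⟩ : ∃! B, B ∈ π ∧ v ∈ B := by
      have hv : v ∈ π.sup id := hπ.2.2 ▸ Finset.mem_univ v
      obtain ⟨B, hB, hvB⟩ := Finset.mem_sup.1 hv
      refine ⟨B, ⟨hB, hvB⟩, ?_⟩
      rintro C' ⟨hC', hvC'⟩
      by_contra hne
      exact Finset.disjoint_left.1 (hπ.2.1 C' hC' B hB hne) hvC' hvB
    refine ⟨B, hB, ?_⟩
    intro w hw
    rw [Finset.mem_filter] at hw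
    exact reach_mem_block hπ hS hB hvB hw.2
  · intro hc e heS
    revert heS
    refine e.inductionOn ?_
    intro i j hij
    have hndij : i ≠ j := fun h => hnd _ hij (Sym2.mk_isDiag_iff.2 h)
    have hadj : (SimpleGraph.fromEdgeSet (↑S : Set (Sym2 (Fin n)))).Adj i j :=
      (SimpleGraph.fromEdgeSet_adj _).2 ⟨Finset.mem_coe.2 hij, hndij⟩
    have hclass : (Finset.univ.filter
        (fun w => (SimpleGraph.fromEdgeSet (↑S : Set (Sym2 (Fin n)))).Reachable i w))
          ∈ compPart n S :=
      Finset.mem_image_of_mem _ (Finset.mem_univ i)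
    obtain ⟨B, hB, hsub⟩ := hc _ hclass
    refine mem_blockEdges.2 ⟨fun h => hnd _ hij h, B, hB, ?_⟩
    intro x hx
    rcases Sym2.mem_iff.1 hx with rfl | rfl
    · exact hsub (Finset.mem_filter.2 ⟨Finset.mem_univ _, SimpleGraph.Reachable.refl _⟩)
    · exact hsub (Finset.mem_filter.2 ⟨Finset.mem_univ _, hadj.reachable⟩)

lemma compPart_card_one {n : ℕ} (hn : 1 ≤ n) (S : Finset (Sym2 (Fin n))) :
    (compPart n S).card = 1
      ↔ (SimpleGraph.fromEdgeSet (↑S : Set (Sym2 (Fin n)))).Connected := by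
  have hne : Nonempty (Fin n) := ⟨⟨0, hn⟩⟩
  set G := SimpleGraph.fromEdgeSet (↑S : Set (Sym2 (Fin n))) with hG
  constructor
  · intro h
    obtain ⟨A, hA⟩ := Finset.card_eq_one.1 h
    rw [SimpleGraph.connected_iff]
    refine ⟨?_, hne⟩
    intro v w
    have hv : Finset.univ.filter (fun x => G.Reachable v x) ∈ compPart n S :=
      Finset.mem_image_of_mem _ (Finset.mem_univ v)
    have hw : Finset.univ.filter (fun x => G.Reachable w x) ∈ compPart n S :=
      Finset.mem_image_of_mem _ (Finset.mem_univ w)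
    rw [hA, Finset.mem_singleton] at hv hw
    have : w ∈ Finset.univ.filter (fun x => G.Reachable v x) := by
      rw [hv, ← hw]
      exact Finset.mem_filter.2 ⟨Finset.mem_univ w, SimpleGraph.Reachable.refl w⟩
    exact (Finset.mem_filter.1 this).2
  · intro h
    rw [Finset.card_eq_one]
    refine ⟨Finset.univ, ?_⟩
    ext B
    simp only [Finset.mem_singleton]
    constructor
    · intro hB
      obtain ⟨v, -, rfl⟩ := Finset.mem_image.1 hB
      ext w
      simp only [Finset.mem_filter, Finset.mem_univ, true_and, iff_true]
      exact h.preconnected v w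
    · rintro rfl
      obtain ⟨v⟩ := hne
      refine Finset.mem_image.2 ⟨v, Finset.mem_univ v, ?_⟩
      ext w
      simp only [Finset.mem_filter, Finset.mem_univ, true_and, iff_true]
      exact h.preconnected v w


lemma ursellInnerSum {n : ℕ} (hn : 1 ≤ n) (T : Finset (Sym2 (Fin n))) :
    ∑ π ∈ (Parts (Finset.univ : Finset (Fin n))).filter (fun π => T ⊆ blockEdges n π),
        (-1 : ℝ) ^ (π.card - 1) * (Nat.factorial (π.card - 1) : ℝ)
      = if isConnGraph n T then 1 else 0 := by
  have hne : Nonempty (Fin n) := ⟨⟨0, hn⟩⟩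
  by_cases hnd : ∀ e ∈ T, ¬ e.IsDiag
  · have hfilter : (Parts (Finset.univ : Finset (Fin n))).filter (fun π => T ⊆ blockEdges n π)
        = (Parts (Finset.univ : Finset (Fin n))).filter (Coarser (compPart n T)) := by
      apply Finset.filter_congr
      intro π hπ
      rw [mem_Parts] at hπ
      exact subset_blockEdges_iff hπ hnd
    rw [hfilter,
      coarsen_sum Finset.univ Finset.univ_nonempty (compPart n T) (isPart_compPart T)]
    have hiff : (compPart n T).card = 1 ↔ isConnGraph n T := by
      rw [compPart_card_one hn]
      exact ⟨fun h => ⟨hnd, h⟩, fun h => h.2⟩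
    rw [if_congr hiff rfl rfl]
  · push_neg at hnd
    obtain ⟨e, heT, hdiag⟩ := hnd
    have h1 : (Parts (Finset.univ : Finset (Fin n))).filter (fun π => T ⊆ blockEdges n π)
        = ∅ := by
      rw [Finset.filter_eq_empty_iff]
      intro π _ hsub
      exact (mem_blockEdges.1 (hsub heT)).1 hdiag
    rw [h1, Finset.sum_empty, if_neg]
    intro hconn
    exact hconn.1 e heT hdiag

/-- The Ursell coefficient `φ_β([n])`, a sum over connected graphs on `[n]`, equals the
alternating sum over partitions `π` of `[n]` of `(−1)^{|π|−1}(|π|−1)! e^{−β ∑_{α∈π} U(α)}`. -/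
theorem stmt1 (n : ℕ) (hn : 1 ≤ n) (β : ℝ) (V : Sym2 (Fin n) → ℝ) :
    (∑ g ∈ Finset.univ.filter (isConnGraph n),
        ∏ e ∈ g, (Real.exp (-β * V e) - 1)) =
    ∑ π ∈ Finset.univ.filter (isSetPartition n),
        (-1 : ℝ) ^ (π.card - 1) * (Nat.factorial (π.card - 1) : ℝ) *
          Real.exp (-β * ∑ B ∈ π, pairEnergy n V B) := by
  have hne : Nonempty (Fin n) := ⟨⟨0, hn⟩⟩
  have hP : Finset.univ.filter (isSetPartition n) = Parts (Finset.univ : Finset (Fin n)) := by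
    ext π
    simp only [Parts, Finset.mem_filter, Finset.mem_univ, true_and, isSetPartition, IsPart]
  rw [hP]
  symm
  calc ∑ π ∈ Parts (Finset.univ : Finset (Fin n)),
        (-1 : ℝ) ^ (π.card - 1) * (Nat.factorial (π.card - 1) : ℝ) *
          Real.exp (-β * ∑ B ∈ π, pairEnergy n V B)
      = ∑ π ∈ Parts (Finset.univ : Finset (Fin n)), ∑ T ∈ Finset.univ,
          (if T ⊆ blockEdges n π then
            (-1 : ℝ) ^ (π.card - 1) * (Nat.factorial (π.card - 1) : ℝ) *
              ∏ e ∈ T, (Real.exp (-β * V e) - 1) else 0) := by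
        refine Finset.sum_congr rfl fun π hπ => ?_
        rw [mem_Parts] at hπ
        rw [exp_expand β V hπ, Finset.mul_sum]
        rw [show (blockEdges n π).powerset
            = Finset.univ.filter (fun T => T ⊆ blockEdges n π) by
          ext T; simp [Finset.mem_powerset]]
        rw [Finset.sum_filter]
    _ = ∑ T ∈ Finset.univ, ∑ π ∈ Parts (Finset.univ : Finset (Fin n)),
          (if T ⊆ blockEdges n π then
            (-1 : ℝ) ^ (π.card - 1) * (Nat.factorial (π.card - 1) : ℝ) *
              ∏ e ∈ T, (Real.exp (-β * V e) - 1) else 0) := Finset.sum_comm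
    _ = ∑ T ∈ Finset.univ,
          (if isConnGraph n T then 1 else 0) * ∏ e ∈ T, (Real.exp (-β * V e) - 1) := by
        refine Finset.sum_congr rfl fun T _ => ?_
        rw [← ursellInnerSum hn T, ← Finset.sum_filter, Finset.sum_mul]
    _ = ∑ g ∈ Finset.univ.filter (isConnGraph n),
          ∏ e ∈ g, (Real.exp (-β * V e) - 1) := by
        rw [Finset.sum_filter]
        refine Finset.sum_congr rfl fun T _ => ?_
        split <;> simp
end

section
/- For every real A ≥ 0, the function f : ℝ → ℝ defined by f(y) = y(e^{y−A} − 1)/((y − A)(e^y − 1)) for y ∉ {0, A}, f(0) = (1 − e^{−A})/A (with f(0)=1 if A=0), f(A) = A/(e^A − 1), is monotone decreasing on ℝ. -/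
/-!
With `M(t) = ∫₀¹ e^{tx} dx = (e^t - 1)/t`, the moment generating function of the uniform
distribution on `[0, 1]`, we have `f(y) = M(y - A) / M(y)`. By Hölder's inequality every moment
generating function is log-convex, and the increments `φ y - φ (y - A)` of a convex function `φ`
over a fixed step `A ≥ 0` are monotone; applied to `φ = log M` this makes `log f` antitone.
-/

open Real MeasureTheory Set

/-- The continuous extension of `y ↦ y(e^{y−A} − 1)/((y − A)(e^y − 1))` at the removable
singularities `y = 0` and `y = A`. -/
noncomputable def fA (A y : ℝ) : ℝ :=
  if y = 0 then (if A = 0 then 1 else (1 - Real.exp (-A)) / A)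
  else if y = A then A / (Real.exp A - 1)
  else y * (Real.exp (y - A) - 1) / ((y - A) * (Real.exp y - 1))

theorem ConvexOn.monotone_sub_comp_sub {𝕜 : Type*} [Field 𝕜] [LinearOrder 𝕜]
    [IsStrictOrderedRing 𝕜] {f : 𝕜 → 𝕜} (hf : ConvexOn 𝕜 univ f) {h : 𝕜} (hh : 0 ≤ h) :
    Monotone fun x ↦ f x - f (x - h) := by
  intro a b hab
  rcases hh.eq_or_lt with rfl | hh
  · simp
  have hslope : slope f (a - h) a ≤ slope f (b - h) b :=
    calc slope f (a - h) a
        ≤ slope f (a - h) b :=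
          hf.slope_mono (mem_univ _) ⟨mem_univ _, by simp only [mem_singleton_iff]; linarith⟩
            ⟨mem_univ _, by simp only [mem_singleton_iff]; linarith⟩ hab
      _ = slope f b (a - h) := slope_comm _ _ _
      _ ≤ slope f b (b - h) :=
          hf.slope_mono (mem_univ _) ⟨mem_univ _, by simp only [mem_singleton_iff]; linarith⟩
            ⟨mem_univ _, by simp only [mem_singleton_iff]; linarith⟩ (by linarith)
      _ = slope f (b - h) b := slope_comm _ _ _
  rwa [slope_def_field, slope_def_field, sub_sub_cancel, sub_sub_cancel,
    div_le_div_iff_of_pos_right hh] at hslope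

namespace ProbabilityTheory

variable {Ω : Type*} {mΩ : MeasurableSpace Ω} {μ : Measure Ω} {X : Ω → ℝ}

lemma memLp_exp_mul_mul_of_integrable {x a : ℝ} (hx : Integrable (fun ω ↦ exp (x * X ω)) μ)
    (ha : 0 < a) : MemLp (fun ω ↦ exp (a * x * X ω)) (ENNReal.ofReal (1 / a)) μ := by
  convert (memLp_one_iff_integrable.2 hx).norm_rpow_div (ENNReal.ofReal a) using 1
  · funext ω
    rw [norm_of_nonneg (exp_pos _).le, ENNReal.toReal_ofReal ha.le, ← exp_mul]
    ring_nf
  · rw [one_div, ENNReal.ofReal_inv_of_pos ha, one_div]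

lemma mgf_mul_add_mul_le_rpow_mul_rpow {x y a b : ℝ} (hx : x ∈ integrableExpSet X μ)
    (hy : y ∈ integrableExpSet X μ) (ha : 0 < a) (hb : 0 < b) (hab : a + b = 1) :
    mgf X μ (a * x + b * y) ≤ mgf X μ x ^ a * mgf X μ y ^ b := by
  have hHolder := integral_mul_le_Lp_mul_Lq_of_nonneg (μ := μ)
    (Real.holderConjugate_one_div ha hb hab)
    (ae_of_all _ fun ω ↦ (exp_pos (a * x * X ω)).le)
    (ae_of_all _ fun ω ↦ (exp_pos (b * y * X ω)).le)
    (memLp_exp_mul_mul_of_integrable hx ha) (memLp_exp_mul_mul_of_integrable hy hb)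
  simp only [one_div_one_div, ← exp_add, ← exp_mul] at hHolder
  have hxa : ∀ ω, a * x * X ω * (1 / a) = x * X ω := fun ω ↦ by field_simp
  have hyb : ∀ ω, b * y * X ω * (1 / b) = y * X ω := fun ω ↦ by field_simp
  simp only [hxa, hyb, ← add_mul] at hHolder
  exact hHolder

lemma convexOn_cgf : ConvexOn ℝ (integrableExpSet X μ) (cgf X μ) := by
  rcases eq_zero_or_neZero μ with rfl | hμ
  · rw [cgf_zero_measure]
    exact convexOn_const 0 convex_integrableExpSet
  refine convexOn_iff_forall_pos.2 ⟨convex_integrableExpSet, fun x hx y hy a b ha hb hab ↦ ?_⟩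
  have hMx := mgf_pos' hμ.out hx
  have hMy := mgf_pos' hμ.out hy
  calc cgf X μ (a • x + b • y)
      ≤ log (mgf X μ x ^ a * mgf X μ y ^ b) :=
        log_le_log (mgf_pos' hμ.out (convex_integrableExpSet hx hy ha.le hb.le hab))
          (mgf_mul_add_mul_le_rpow_mul_rpow hx hy ha hb hab)
    _ = a • cgf X μ x + b • cgf X μ y := by
        rw [log_mul (by positivity) (by positivity), log_rpow hMx, log_rpow hMy]; rfl

end ProbabilityTheory

open ProbabilityTheory

local notation "μ₀₁" => volume.restrict (Ioc (0 : ℝ) 1)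

lemma integrable_exp_mul_restrict_Ioc (t a b : ℝ) :
    Integrable (fun x ↦ exp (t * x)) (volume.restrict (Ioc a b)) :=
  (continuous_exp.comp (continuous_const.mul continuous_id)).integrableOn_Ioc

lemma integrableExpSet_id_restrict_Ioc (a b : ℝ) :
    integrableExpSet id (volume.restrict (Ioc a b)) = univ :=
  eq_univ_of_forall fun t ↦ integrable_exp_mul_restrict_Ioc t a b

lemma mgf_id_restrict_Ioc_zero_one_pos (t : ℝ) : 0 < mgf id μ₀₁ t :=
  mgf_pos' (by simp) (integrable_exp_mul_restrict_Ioc t 0 1)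

lemma mgf_id_restrict_Ioc_zero_one_zero : mgf id μ₀₁ 0 = 1 := by
  simp [mgf_zero']

lemma mgf_id_restrict_Ioc_zero_one {t : ℝ} (ht : t ≠ 0) : mgf id μ₀₁ t = (exp t - 1) / t := by
  simp only [mgf, id_eq]
  rw [← intervalIntegral.integral_of_le zero_le_one,
    intervalIntegral.integral_comp_mul_left (fun x ↦ exp x) ht]
  simp only [mul_zero, mul_one, integral_exp, exp_zero, smul_eq_mul]
  field_simp

lemma fA_eq_mgf_div (A y : ℝ) : fA A y = mgf id μ₀₁ (y - A) / mgf id μ₀₁ y := by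
  rcases eq_or_ne y 0 with rfl | hy
  · rcases eq_or_ne A 0 with rfl | hA
    · simp [fA]
    rw [fA, if_pos rfl, if_neg hA, zero_sub, mgf_id_restrict_Ioc_zero_one (neg_ne_zero.2 hA),
      mgf_id_restrict_Ioc_zero_one_zero, exp_neg]
    field_simp
    ring
  rcases eq_or_ne y A with rfl | hyA
  · rw [fA, if_neg hy, if_pos rfl, sub_self, mgf_id_restrict_Ioc_zero_one_zero,
      mgf_id_restrict_Ioc_zero_one hy, one_div_div]
  have hexp : exp y - 1 ≠ 0 := sub_ne_zero.2 ((exp_eq_one_iff y).not.2 hy)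
  rw [fA, if_neg hy, if_neg hyA, mgf_id_restrict_Ioc_zero_one (sub_ne_zero.2 hyA),
    mgf_id_restrict_Ioc_zero_one hy]
  field_simp

/-- For every `A ≥ 0` the function `f` is monotone decreasing on `ℝ`. -/
theorem stmt3 (A : ℝ) (hA : 0 ≤ A) : Antitone (fA A) := by
  intro a b hab
  have hcgf : ConvexOn ℝ univ (cgf id μ₀₁) := integrableExpSet_id_restrict_Ioc 0 1 ▸ convexOn_cgf
  have hinc := hcgf.monotone_sub_comp_sub hA hab
  simp only [cgf] at hinc
  have hM := mgf_id_restrict_Ioc_zero_one_pos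
  rw [fA_eq_mgf_div, fA_eq_mgf_div,
    ← log_le_log_iff (div_pos (hM _) (hM _)) (div_pos (hM _) (hM _)),
    log_div (hM _).ne' (hM _).ne', log_div (hM _).ne' (hM _).ne']
  linarith
end

section
/- The function g : ℝ → ℝ defined by g(y) = e^y/(e^y − 1) − 1/y for y ≠ 0 and g(0) = 1/2 is strictly increasing on ℝ. -/
/-- The function `g(y) = e^y/(e^y − 1) − 1/y` extended by `g(0) = 1/2`. -/
noncomputable def gfun (y : ℝ) : ℝ :=
  if y = 0 then 1 / 2 else Real.exp y / (Real.exp y - 1) - 1 / y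

/-!
With `u = y / 2` one has `e^y / (e^y - 1) = (1 + coth u) / 2`, so `g(y) = (1 + L(y/2)) / 2` for the
Langevin function `L(u) = coth u - 1/u`. `L` is odd, `L' = 1/u² - 1/sinh² u > 0` on `(0, ∞)`
because `u < sinh u`, and `L > 0 = L(0)` there because `tanh u < u`.
-/

open Real Set

noncomputable def langevin (u : ℝ) : ℝ := cosh u / sinh u - u⁻¹

-- Lean's `x / 0 = 0` gives `langevin 0 = 0`, the continuous value, which matches `gfun 0 = 1 / 2`.
theorem langevin_zero : langevin 0 = 0 := by simp [langevin]

theorem langevin_neg (u : ℝ) : langevin (-u) = -langevin u := by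
  simp only [langevin, cosh_neg, sinh_neg, div_neg, inv_neg]
  ring

theorem hasDerivAt_langevin {u : ℝ} (hu : u ≠ 0) :
    HasDerivAt langevin ((u ^ 2)⁻¹ - (sinh u ^ 2)⁻¹) u := by
  have hsinh : sinh u ≠ 0 := sinh_ne_zero.mpr hu
  refine (((hasDerivAt_cosh u).div (hasDerivAt_sinh u) hsinh).sub (hasDerivAt_inv hu)).congr_deriv ?_
  field_simp
  linear_combination (-u ^ 2) * cosh_sq u

theorem sinh_lt_mul_cosh {x : ℝ} (hx : 0 < x) : sinh x < x * cosh x := by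
  have hderiv (t : ℝ) : HasDerivAt (fun t => t * cosh t - sinh t) (t * sinh t) t := by
    refine (((hasDerivAt_id t).mul (hasDerivAt_cosh t)).sub (hasDerivAt_sinh t)).congr_deriv ?_
    simp
  have hmono : StrictMonoOn (fun t => t * cosh t - sinh t) (Ici 0) := by
    refine strictMonoOn_of_deriv_pos (convex_Ici 0)
      (fun t _ => (hderiv t).continuousAt.continuousWithinAt) fun t ht => ?_
    rw [interior_Ici, mem_Ioi] at ht
    rw [(hderiv t).deriv]
    exact mul_pos ht (sinh_pos_iff.mpr ht)
  simpa using hmono self_mem_Ici hx.le hx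

theorem langevin_pos {u : ℝ} (hu : 0 < u) : 0 < langevin u := by
  have hsinh : 0 < sinh u := sinh_pos_iff.mpr hu
  rw [langevin, sub_pos, inv_lt_iff_one_lt_mul₀ hu, div_mul_eq_mul_div, one_lt_div hsinh]
  linarith [sinh_lt_mul_cosh hu]

theorem langevin_strictMonoOn_Ioi : StrictMonoOn langevin (Ioi 0) := by
  refine strictMonoOn_of_deriv_pos (convex_Ioi 0)
    (fun u hu => (hasDerivAt_langevin (ne_of_gt hu)).continuousAt.continuousWithinAt)
    fun u hu => ?_
  rw [interior_Ioi, mem_Ioi] at hu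
  rw [(hasDerivAt_langevin hu.ne').deriv, sub_pos]
  have hsq : u ^ 2 < sinh u ^ 2 := pow_lt_pow_left₀ (self_lt_sinh_iff.mpr hu) hu.le two_ne_zero
  exact inv_strictAnti₀ (by positivity) hsq

theorem langevin_strictMonoOn_Ici : StrictMonoOn langevin (Ici 0) := by
  intro a ha b _ hab
  rcases (mem_Ici.mp ha).eq_or_lt with rfl | ha_pos
  · rw [langevin_zero]
    exact langevin_pos hab
  · exact langevin_strictMonoOn_Ioi ha_pos (ha_pos.trans hab) hab

theorem langevin_strictMono : StrictMono langevin :=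
  strictMono_of_odd_strictMonoOn_nonneg langevin_neg langevin_strictMonoOn_Ici

theorem gfun_eq_langevin (y : ℝ) : gfun y = (1 + langevin (y / 2)) / 2 := by
  rcases eq_or_ne y 0 with rfl | hy
  · simp [gfun, langevin_zero]
  have hexp : exp y = exp (y / 2) ^ 2 := by rw [← exp_nat_mul]; ring_nf
  have hne : exp (y / 2) ^ 2 - 1 ≠ 0 := by
    rw [← hexp, sub_ne_zero, Ne, exp_eq_one_iff]; exact hy
  rw [gfun, if_neg hy, langevin, cosh_eq, sinh_eq, exp_neg, hexp]
  field_simp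
  ring

/-- `g` is strictly increasing on `ℝ`. -/
theorem stmt5 : StrictMono gfun := by
  intro a b hab
  rw [gfun_eq_langevin, gfun_eq_langevin]
  have := langevin_strictMono (div_lt_div_of_pos_right hab two_pos)
  linarith
end

section
/- Let A ≥ 0 and b ≥ 0 be reals. Then b(1 − e^{−(A − b)})/((A − b)(e^b − 1)) ≤ (1 − e^{−A})/A, where each side is interpreted by continuous extension when a denominator vanishes. -/
open Real

-- sinh u ≤ u * cosh u for u ≥ 0
lemma aux_sinh_le_mul_cosh {u : ℝ} (hu : 0 ≤ u) : Real.sinh u ≤ u * Real.cosh u := by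
  have hmono : MonotoneOn (fun x : ℝ => x * Real.cosh x - Real.sinh x) (Set.Ici 0) := by
    have hd : ∀ x : ℝ, HasDerivAt (fun x : ℝ => x * Real.cosh x - Real.sinh x)
        (x * Real.sinh x) x := by
      intro x
      have h1 := (hasDerivAt_id x).mul (Real.hasDerivAt_cosh x)
      have h2 := h1.sub (Real.hasDerivAt_sinh x)
      refine h2.congr_deriv ?_
      simp only [id_eq]
      ring
    apply monotoneOn_of_deriv_nonneg (convex_Ici 0)
    · exact (Continuous.continuousOn (by continuity))
    · intro x hx
      exact ((hd x).differentiableAt).differentiableWithinAt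
    · intro x hx
      rw [interior_Ici, Set.mem_Ioi] at hx
      rw [(hd x).deriv]
      exact mul_nonneg hx.le (Real.sinh_nonneg_iff.mpr hx.le)
  have := hmono (Set.self_mem_Ici) (Set.mem_Ici.mpr hu) hu
  simp at this
  linarith

lemma aux_pade {c : ℝ} (hc : 0 ≤ c) : (2 - c) * Real.exp c ≤ c + 2 := by
  have h := aux_sinh_le_mul_cosh (by linarith : (0:ℝ) ≤ c / 2)
  rw [Real.sinh_eq, Real.cosh_eq] at h
  set E := Real.exp (c/2) with hE
  set F := Real.exp (-(c/2)) with hF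
  have hn : F * E = 1 := by rw [hF, hE, ← Real.exp_add]; simp
  have he : Real.exp c = E * E := by rw [hE, ← Real.exp_add]; ring_nf
  have hp : 0 < E := Real.exp_pos _
  have key : (E - F) * E ≤ (c/2 * ((E + F)/2)) * (2*E) := by
    have := mul_le_mul_of_nonneg_right h (by linarith : (0:ℝ) ≤ 2*E)
    calc (E - F) * E = (E - F)/2 * (2*E) := by ring
    _ ≤ _ := this
  have k1 : (E - F) * E = E*E - 1 := by linear_combination -hn
  have k2 : (c/2 * ((E + F)/2)) * (2*E) = c/2 * (E*E + 1) := by linear_combination (c/2) * hn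
  rw [k1, k2] at key
  rw [he]
  nlinarith [key]

lemma aux_quad {s : ℝ} (hs : 0 ≤ s) : 1 + s + s^2/2 ≤ Real.exp s := by
  have h1 : s ≤ Real.sinh s := Real.self_le_sinh_iff.mpr hs
  have h2 : s/2 ≤ Real.sinh (s/2) := Real.self_le_sinh_iff.mpr (by linarith)
  have h3 : Real.cosh s + Real.sinh s = Real.exp s := Real.cosh_add_sinh s
  have h4 : Real.cosh s = Real.cosh (s/2)^2 + Real.sinh (s/2)^2 := by
    have := Real.cosh_two_mul (s/2)
    rw [show 2 * (s/2) = s by ring] at this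
    exact this
  have h5 : Real.cosh (s/2)^2 - Real.sinh (s/2)^2 = 1 := Real.cosh_sq_sub_sinh_sq (s/2)
  nlinarith [mul_self_le_mul_self (by linarith : (0:ℝ) ≤ s/2) h2]

lemma aux_sq {s : ℝ} (hs : 0 ≤ s) : s^2 * Real.exp s ≤ (Real.exp s - 1)^2 := by
  have h2 : s/2 ≤ Real.sinh (s/2) := Real.self_le_sinh_iff.mpr (by linarith)
  rw [Real.sinh_eq] at h2
  set E := Real.exp (s/2) with hE
  set F := Real.exp (-(s/2)) with hF
  have hn : F * E = 1 := by rw [hF, hE, ← Real.exp_add]; simp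
  have he : Real.exp s = E * E := by rw [hE, ← Real.exp_add]; ring_nf
  have hp : 0 < E := Real.exp_pos _
  have hsq : (s/2)^2 ≤ ((E - F)/2)^2 :=
    mul_self_le_mul_self (by linarith : (0:ℝ) ≤ s/2) h2 |>.trans_eq (by ring) |>.trans_eq' (by ring)
  have key : (s/2)^2 * (2*E)^2 ≤ ((E - F)/2)^2 * (2*E)^2 :=
    mul_le_mul_of_nonneg_right hsq (by positivity)
  have k1 : ((E - F)/2)^2 * (2*E)^2 = ((E - F) * E)^2 := by ring
  have k2 : (E - F) * E = E*E - 1 := by linear_combination -hn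
  rw [he]
  nlinarith [key, k1, k2]

-- core inequality
lemma aux_core (s c : ℝ) (hs : 0 ≤ s) (hc : 0 ≤ c) :
    s * (s + c) * (Real.exp s * Real.exp c - Real.exp s)
      ≤ (Real.exp s - 1) * (Real.exp s * Real.exp c - 1) * c := by
  have h1 := aux_sq hs
  have h2 := aux_quad hs
  have h3 := aux_pade hc
  have h4 := Real.add_one_le_exp c
  have hEs := Real.exp_pos s
  have hEc := Real.exp_pos c
  have t1 : 0 ≤ c * ((Real.exp s - 1)^2 - s^2 * Real.exp s) :=
    mul_nonneg hc (by linarith)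
  have t2 : 0 ≤ (c * Real.exp s * (Real.exp c - 1)) * ((Real.exp s - 1) - (s + s^2/2)) := by
    apply mul_nonneg
    · apply mul_nonneg (mul_nonneg hc hEs.le); linarith
    · linarith
  have t3 : 0 ≤ (s^2 * Real.exp s / 2) * ((c + 2) - (2 - c) * Real.exp c) := by
    apply mul_nonneg
    · positivity
    · linarith
  nlinarith [t1, t2, t3]

lemma main_pos (A b : ℝ) (hA : 0 < A) (hb : 0 < b) (hne : b ≠ A) :
    b * (Real.exp (b - A) - 1) / ((b - A) * (Real.exp b - 1)) ≤ (1 - Real.exp (-A)) / A := by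
  have hEA1 : 1 < Real.exp A := by rw [← Real.exp_zero]; exact Real.exp_lt_exp.mpr hA
  have hEB1 : 1 < Real.exp b := by rw [← Real.exp_zero]; exact Real.exp_lt_exp.mpr hb
  have hEAne : Real.exp A ≠ 0 := (Real.exp_pos A).ne'
  have hEB1ne : Real.exp b - 1 ≠ 0 := by linarith
  have hAne : A ≠ 0 := hA.ne'
  have hR : (1 - Real.exp (-A)) / A = (Real.exp A - 1) / (Real.exp A * A) := by
    rw [Real.exp_neg]; field_simp
  rcases lt_or_gt_of_ne hne with hlt | hgt
  · -- b < A
    have hbA : b - A ≠ 0 := by linarith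
    have hAb : A - b ≠ 0 := by linarith
    have hL : b * (Real.exp (b - A) - 1) / ((b - A) * (Real.exp b - 1))
        = b * (Real.exp A - Real.exp b) / ((A - b) * (Real.exp b - 1) * Real.exp A) := by
      rw [Real.exp_sub]; field_simp; ring
    rw [hL, hR]
    rw [div_le_div_iff₀
      (mul_pos (mul_pos (by linarith) (by linarith)) (Real.exp_pos A))
      (mul_pos (Real.exp_pos A) hA)]
    have hprod : Real.exp b * Real.exp (A - b) = Real.exp A := by
      rw [← Real.exp_add]; ring_nf
    have hcore := aux_core b (A - b) hb.le (by linarith)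
    rw [hprod] at hcore
    nlinarith [mul_le_mul_of_nonneg_left hcore (Real.exp_pos A).le]
  · -- A < b
    have hbA : b - A ≠ 0 := by linarith
    have hL : b * (Real.exp (b - A) - 1) / ((b - A) * (Real.exp b - 1))
        = b * (Real.exp b - Real.exp A) / ((b - A) * (Real.exp b - 1) * Real.exp A) := by
      rw [Real.exp_sub]; field_simp
    rw [hL, hR]
    rw [div_le_div_iff₀
      (mul_pos (mul_pos (by linarith) (by linarith)) (Real.exp_pos A))
      (mul_pos (Real.exp_pos A) hA)]
    have hprod : Real.exp A * Real.exp (b - A) = Real.exp b := by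
      rw [← Real.exp_add]; ring_nf
    have hcore := aux_core A (b - A) hA.le (by linarith)
    rw [hprod] at hcore
    nlinarith [mul_le_mul_of_nonneg_left hcore (Real.exp_pos A).le]

/-- For `A ≥ 0` and `b ≥ 0`,
`b(1 − e^{−(A−b)})/((A − b)(e^b − 1)) ≤ (1 − e^{−A})/A`,
each side interpreted by continuous extension when a denominator vanishes. -/

theorem stmt6 (A b : ℝ) (hA : 0 ≤ A) (hb : 0 ≤ b) : fA A b ≤ fA A 0 := by
  by_cases hb0 : b = 0
  · subst hb0; exact le_refl _
  have hbpos : 0 < b := lt_of_le_of_ne hb (Ne.symm hb0)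
  have hEB1 : 1 < Real.exp b := by rw [← Real.exp_zero]; exact Real.exp_lt_exp.mpr hbpos
  by_cases hA0 : A = 0
  · subst hA0
    rw [fA, if_neg hb0, if_neg hb0, fA, if_pos rfl, if_pos rfl]
    rw [sub_zero]
    rw [div_self (mul_pos hbpos (by linarith : (0:ℝ) < Real.exp b - 1)).ne']
  have hApos : 0 < A := lt_of_le_of_ne hA (Ne.symm hA0)
  have hEA1 : 1 < Real.exp A := by rw [← Real.exp_zero]; exact Real.exp_lt_exp.mpr hApos
  rw [fA, if_neg hb0, fA, if_pos rfl, if_neg hA0]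
  by_cases hbA : b = A
  · rw [if_pos hbA]
    rw [Real.exp_neg]
    rw [div_le_div_iff₀ (by linarith : (0:ℝ) < Real.exp A - 1) hApos]
    have h := aux_sq hApos.le
    have hEAne : Real.exp A ≠ 0 := (Real.exp_pos A).ne'
    have hinv : Real.exp A * (Real.exp A)⁻¹ = 1 := mul_inv_cancel₀ hEAne
    nlinarith [Real.exp_pos A]
  · rw [if_neg hbA]
    exact main_pos A b hApos hbpos hbA
end

section
/- There is a bijection between (a) pairs ((σ_1,...,σ_{n−1}), (λ_1,...,λ_{n−1})) where (σ_i) is a sequence of successive block-pair merges reducing the discrete partition of [n] to the one-block partition and each λ_i is an edge {x,y} with x and y in the two different blocks of σ_i, and (b) pairs (τ, φ_τ) of a tree τ on vertex set [n] together with a bijective labeling φ_τ : E_τ → [n−1] of its n−1 edges. -/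
open scoped Classical

/-- The sequence of partitions obtained from the discrete partition of `[n]` by
successively merging, at step `k+1`, the pair of blocks `sig k` (so `mergeParts n sig k`
is the partition `γ_k` after `k` merges). -/
def mergeParts (n : ℕ) (sig : Fin (n - 1) → Finset (Fin n) × Finset (Fin n)) :
    ℕ → Finset (Finset (Fin n))
  | 0 => (Finset.univ : Finset (Fin n)).image (fun i => ({i} : Finset (Fin n)))
  | k + 1 =>
    if h : k < n - 1 then
      insert ((sig ⟨k, h⟩).1 ∪ (sig ⟨k, h⟩).2)
        (((mergeParts n sig k).erase (sig ⟨k, h⟩).1).erase (sig ⟨k, h⟩).2)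
    else mergeParts n sig k

/-- A pair `((σ_1,…,σ_{n−1}), (λ_1,…,λ_{n−1}))` where `σ_{k+1} = sig k` is an unordered
pair of distinct blocks of `γ_k` (represented as an ordered pair, normalized by the
condition `(lam k).1 < (lam k).2`), and `λ_{k+1} = lam k` is an edge with one endpoint in
each of the two blocks of `σ_{k+1}`. -/
structure MergeEdgeSeq (n : ℕ) where
  sig : Fin (n - 1) → Finset (Fin n) × Finset (Fin n)
  lam : Fin (n - 1) → Fin n × Fin n
  mem1 : ∀ k : Fin (n - 1), (sig k).1 ∈ mergeParts n sig (k : ℕ)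
  mem2 : ∀ k : Fin (n - 1), (sig k).2 ∈ mergeParts n sig (k : ℕ)
  ne : ∀ k : Fin (n - 1), (sig k).1 ≠ (sig k).2
  lam1 : ∀ k : Fin (n - 1), (lam k).1 ∈ (sig k).1
  lam2 : ∀ k : Fin (n - 1), (lam k).2 ∈ (sig k).2
  ord : ∀ k : Fin (n - 1), (lam k).1 < (lam k).2

/-- A tree on vertex set `[n]` together with a bijective labeling of its `n − 1` edges by
`1, …, n−1`: equivalently, an injective list of `n − 1` non-diagonal edges whose union is
a connected (hence tree) graph on `[n]`. -/
structure LabeledTree (n : ℕ) where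
  edge : Fin (n - 1) → Sym2 (Fin n)
  inj : Function.Injective edge
  nondiag : ∀ i, ¬ (edge i).IsDiag
  conn : (SimpleGraph.fromEdgeSet (Set.range edge)).Connected

/-!
After `k` merges the partition `γ_k` is the partition of `[n]` into the connected components of
the graph spanned by the first `k` edges `λ_1, …, λ_k`, because merging the two blocks that
contain the endpoints of `λ_{k+1}` is exactly what adding that edge does to the components. So
each `λ_{k+1}` joins two different components of its predecessors, the `λ_i` are distinct, and
since `n − 1` merges leave a single block they span a connected graph on `[n]` with `n − 1`
edges, i.e. an edge-labelled tree. Conversely every edge of a tree is a bridge, so the endpoints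
of the edge labelled `k + 1` lie in different components of the first `k` edges, and these two
components form `σ_{k+1}`. The two constructions are inverse because `σ` is determined by `λ`.
-/

open Finset

namespace SimpleGraph

section Components

variable {V : Type*} {G : SimpleGraph V}

lemma reachable_sup_edge_iff {a b u v : V} :
    (G ⊔ edge a b).Reachable u v ↔
      G.Reachable u v ∨
        ((G.Reachable a u ∨ G.Reachable b u) ∧ (G.Reachable a v ∨ G.Reachable b v)) := by
  constructor
  · rintro ⟨p⟩
    induction p with
    | nil => exact .inl .rfl
    | @cons u x v hux _ ih =>
      rcases hux with hux | hux
      · have := hux.reachable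
        rcases ih with h | ⟨hx, hv⟩
        · exact .inl (this.trans h)
        · refine .inr ⟨?_, hv⟩
          rcases hx with hx | hx
          exacts [.inl (hx.trans this.symm), .inr (hx.trans this.symm)]
      · rw [edge_adj] at hux
        refine .inr ⟨by rcases hux.1 with ⟨rfl, -⟩ | ⟨rfl, -⟩ <;> simp, ?_⟩
        rcases ih with h | ⟨-, hv⟩
        · rcases hux.1 with ⟨-, rfl⟩ | ⟨-, rfl⟩ <;> simp [h]
        · exact hv
  · have hab : (G ⊔ edge a b).Reachable a b := by
      rcases eq_or_ne a b with rfl | hab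
      · exact .rfl
      · exact Adj.reachable (.inr ((edge_adj ..).2 ⟨.inl ⟨rfl, rfl⟩, hab⟩))
    have hG {x y : V} (h : G.Reachable x y) : (G ⊔ edge a b).Reachable x y := h.mono le_sup_left
    rintro (h | ⟨hu, hv⟩)
    · exact hG h
    · rcases hu with hu | hu <;> rcases hv with hv | hv
      exacts [(hG hu).symm.trans (hG hv), ((hG hu).symm.trans hab).trans (hG hv),
        ((hG hu).symm.trans hab.symm).trans (hG hv), (hG hu).symm.trans (hG hv)]

variable [Fintype V]

variable (G) in
noncomputable def componentFinset (v : V) : Finset V := univ.filter (G.Reachable v)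

@[simp]
lemma mem_componentFinset {v w : V} : w ∈ G.componentFinset v ↔ G.Reachable v w := by
  simp [componentFinset]

lemma self_mem_componentFinset (v : V) : v ∈ G.componentFinset v :=
  mem_componentFinset.2 .rfl

lemma componentFinset_eq_iff {v w : V} :
    G.componentFinset v = G.componentFinset w ↔ G.Reachable v w := by
  refine ⟨fun h => mem_componentFinset.1 (h ▸ self_mem_componentFinset w), fun h => ?_⟩
  ext x
  simp only [mem_componentFinset]
  exact ⟨h.symm.trans, h.trans⟩

variable [DecidableEq V]

lemma componentFinset_sup_edge_of_mem {a b v : V}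
    (hv : v ∈ G.componentFinset a ∪ G.componentFinset b) :
    (G ⊔ edge a b).componentFinset v = G.componentFinset a ∪ G.componentFinset b := by
  ext w
  simp only [mem_union, mem_componentFinset] at hv ⊢
  rw [reachable_sup_edge_iff]
  exact ⟨fun h => h.elim (fun h => hv.imp (·.trans h) (·.trans h)) And.right,
    fun h => .inr ⟨hv, h⟩⟩

lemma componentFinset_sup_edge_of_notMem {a b v : V}
    (hv : v ∉ G.componentFinset a ∪ G.componentFinset b) :
    (G ⊔ edge a b).componentFinset v = G.componentFinset v := by
  ext w
  simp only [mem_union, mem_componentFinset, not_or] at hv ⊢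
  rw [reachable_sup_edge_iff]
  exact ⟨fun h => h.resolve_right fun h => h.1.elim hv.1 hv.2, .inl⟩

variable (G) in
noncomputable def componentPartition : Finset (Finset V) := univ.image G.componentFinset

lemma componentFinset_mem_componentPartition (v : V) :
    G.componentFinset v ∈ G.componentPartition :=
  mem_image_of_mem _ (mem_univ v)

lemma eq_componentFinset_of_mem {B : Finset V} {v : V} (hB : B ∈ G.componentPartition)
    (hv : v ∈ B) : B = G.componentFinset v := by
  obtain ⟨w, -, rfl⟩ := mem_image.1 hB
  exact componentFinset_eq_iff.2 (mem_componentFinset.1 hv)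

lemma componentPartition_bot :
    (⊥ : SimpleGraph V).componentPartition = univ.image ({·}) := by
  unfold componentPartition
  congr 1
  funext v
  ext w
  simp [eq_comm]

lemma componentPartition_sup_edge (a b : V) :
    (G ⊔ edge a b).componentPartition =
      insert (G.componentFinset a ∪ G.componentFinset b)
        ((G.componentPartition.erase (G.componentFinset a)).erase (G.componentFinset b)) := by
  ext B
  simp only [componentPartition, mem_insert, mem_erase, mem_image, mem_univ, true_and]
  constructor
  · rintro ⟨v, rfl⟩
    by_cases hv : v ∈ G.componentFinset a ∪ G.componentFinset b
    · exact .inl (componentFinset_sup_edge_of_mem hv)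
    · rw [componentFinset_sup_edge_of_notMem hv]
      simp only [mem_union, mem_componentFinset, not_or] at hv
      exact .inr ⟨fun h => hv.2 (componentFinset_eq_iff.1 h).symm,
        fun h => hv.1 (componentFinset_eq_iff.1 h).symm, v, rfl⟩
  · rintro (rfl | ⟨hb, ha, v, rfl⟩)
    · exact ⟨a, componentFinset_sup_edge_of_mem
        (mem_union_left _ (self_mem_componentFinset a))⟩
    · refine ⟨v, componentFinset_sup_edge_of_notMem ?_⟩
      simp only [mem_union, mem_componentFinset, not_or]
      exact ⟨fun h => ha (componentFinset_eq_iff.2 h.symm),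
        fun h => hb (componentFinset_eq_iff.2 h.symm)⟩

lemma card_componentPartition_sup_edge {a b : V} (h : ¬ G.Reachable a b) :
    #(G ⊔ edge a b).componentPartition + 1 = #G.componentPartition := by
  have ha := componentFinset_mem_componentPartition (G := G) a
  have hb : G.componentFinset b ∈ G.componentPartition.erase (G.componentFinset a) :=
    mem_erase.2 ⟨fun hab => h (componentFinset_eq_iff.1 hab.symm),
      componentFinset_mem_componentPartition b⟩
  have hunion : G.componentFinset a ∪ G.componentFinset b ∉
      (G.componentPartition.erase (G.componentFinset a)).erase (G.componentFinset b) := by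
    intro hmem
    have hmem' := mem_of_mem_erase hmem
    exact (mem_erase.1 hmem').1 <| eq_componentFinset_of_mem (mem_of_mem_erase hmem')
      (mem_union_left _ (self_mem_componentFinset a))
  rw [componentPartition_sup_edge, card_insert_of_notMem hunion, card_erase_add_one hb,
    card_erase_add_one ha]

lemma connected_of_card_componentPartition_eq_one (h : #G.componentPartition = 1) :
    G.Connected := by
  obtain ⟨B, hB⟩ := card_pos.1 (h ▸ one_pos)
  obtain ⟨v, -, -⟩ := mem_image.1 hB
  refine (connected_iff G).2 ⟨fun u w => ?_, ⟨v⟩⟩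
  exact componentFinset_eq_iff.1 <| card_le_one.1 h.le _
    (componentFinset_mem_componentPartition u) _ (componentFinset_mem_componentPartition w)

end Components

section PrefixGraph

variable {V : Type*} {m : ℕ} (E : Fin m → Sym2 V)

def prefixGraph (k : ℕ) : SimpleGraph V :=
  fromEdgeSet {e | ∃ i : Fin m, (i : ℕ) < k ∧ E i = e}

lemma prefixGraph_zero : prefixGraph E 0 = ⊥ := by
  simp [prefixGraph]

lemma prefixGraph_succ {k : ℕ} (hk : k < m) {a b : V} (hab : E ⟨k, hk⟩ = s(a, b)) :
    prefixGraph E (k + 1) = prefixGraph E k ⊔ edge a b := by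
  rw [prefixGraph, prefixGraph, edge, ← fromEdgeSet_union, ← hab]
  congr 1
  ext e
  simp only [Set.mem_ofPred_eq, Set.mem_union, Set.mem_singleton_iff, Nat.lt_succ_iff_lt_or_eq]
  constructor
  · rintro ⟨i, hi | hi, rfl⟩
    exacts [.inl ⟨i, hi, rfl⟩, .inr (congrArg E (Fin.ext hi))]
  · rintro (⟨i, hi, rfl⟩ | rfl)
    exacts [⟨i, .inl hi, rfl⟩, ⟨_, .inr rfl, rfl⟩]

lemma prefixGraph_length : prefixGraph E m = fromEdgeSet (Set.range E) := by
  simp [prefixGraph, Set.range]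

lemma prefixGraph_adj {i : Fin m} {k : ℕ} (hik : (i : ℕ) < k) {a b : V} (hab : E i = s(a, b))
    (hne : a ≠ b) : (prefixGraph E k).Adj a b :=
  (fromEdgeSet_adj _).2 ⟨⟨i, hik, hab⟩, hne⟩

lemma prefixGraph_le_deleteEdges {E : Fin m → Sym2 V} (hE : Function.Injective E) (i : Fin m) :
    prefixGraph E i ≤ (fromEdgeSet (Set.range E)).deleteEdges {E i} := by
  rw [deleteEdges, ← fromEdgeSet_sdiff]
  refine fromEdgeSet_mono ?_
  rintro _ ⟨j, hj, rfl⟩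
  exact ⟨⟨j, rfl⟩, fun h => hj.ne (congrArg Fin.val (hE h))⟩

lemma not_reachable_prefixGraph_of_isAcyclic {E : Fin m → Sym2 V} (hE : Function.Injective E)
    (hacyc : (fromEdgeSet (Set.range E)).IsAcyclic) {i : Fin m} {a b : V} (hab : E i = s(a, b))
    (hne : a ≠ b) : ¬ (prefixGraph E i).Reachable a b := by
  have hbridge :=
    isAcyclic_iff_forall_adj_isBridge.1 hacyc ((fromEdgeSet_adj _).2 ⟨⟨i, hab⟩, hne⟩)
  rw [isBridge_iff, ← hab] at hbridge
  exact fun h => hbridge (h.mono (prefixGraph_le_deleteEdges hE i))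

end PrefixGraph

end SimpleGraph

namespace Sym2

variable {α : Type*} [LinearOrder α]

lemma mk_inf_sup (e : Sym2 α) : s(e.inf, e.sup) = e :=
  sortEquiv.symm_apply_apply e

lemma inf_lt_sup_of_not_isDiag {e : Sym2 α} (he : ¬ e.IsDiag) : e.inf < e.sup :=
  e.inf_le_sup.lt_of_ne fun h => he (e.mk_inf_sup ▸ mk_isDiag_iff.2 h)

lemma inf_mk_of_lt {a b : α} (h : a < b) : s(a, b).inf = a := inf_of_le_left h.le

lemma sup_mk_of_lt {a b : α} (h : a < b) : s(a, b).sup = b := sup_of_le_right h.le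

end Sym2

open SimpleGraph

lemma mergeParts_succ_eq_componentPartition {n k : ℕ}
    {sig : Fin (n - 1) → Finset (Fin n) × Finset (Fin n)} (hk : k < n - 1)
    {G : SimpleGraph (Fin n)} {a b : Fin n} (hparts : mergeParts n sig k = G.componentPartition)
    (ha : (sig ⟨k, hk⟩).1 = G.componentFinset a)
    (hb : (sig ⟨k, hk⟩).2 = G.componentFinset b) :
    mergeParts n sig (k + 1) = (G ⊔ edge a b).componentPartition := by
  rw [mergeParts, dif_pos hk, componentPartition_sup_edge, hparts, ha, hb]

attribute [ext] MergeEdgeSeq LabeledTree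

namespace MergeEdgeSeq

variable {n : ℕ} (m : MergeEdgeSeq n)

def treeEdge (i : Fin (n - 1)) : Sym2 (Fin n) := s((m.lam i).1, (m.lam i).2)

lemma inf_treeEdge (i : Fin (n - 1)) : (m.treeEdge i).inf = (m.lam i).1 :=
  Sym2.inf_mk_of_lt (m.ord i)

lemma sup_treeEdge (i : Fin (n - 1)) : (m.treeEdge i).sup = (m.lam i).2 :=
  Sym2.sup_mk_of_lt (m.ord i)

theorem mergeParts_eq_componentPartition {k : ℕ} (hk : k ≤ n - 1) :
    mergeParts n m.sig k = (prefixGraph m.treeEdge k).componentPartition := by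
  induction k with
  | zero => rw [prefixGraph_zero, componentPartition_bot]; rfl
  | succ k ih =>
    have hk' : k < n - 1 := hk
    have hparts := ih hk'.le
    rw [prefixGraph_succ m.treeEdge hk' rfl]
    exact mergeParts_succ_eq_componentPartition hk' hparts
      (eq_componentFinset_of_mem (hparts ▸ m.mem1 ⟨k, hk'⟩) (m.lam1 _))
      (eq_componentFinset_of_mem (hparts ▸ m.mem2 ⟨k, hk'⟩) (m.lam2 _))

theorem sig_eq (k : Fin (n - 1)) :
    m.sig k = ((prefixGraph m.treeEdge k).componentFinset (m.lam k).1,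
      (prefixGraph m.treeEdge k).componentFinset (m.lam k).2) := by
  have hparts := m.mergeParts_eq_componentPartition k.isLt.le
  exact Prod.ext (eq_componentFinset_of_mem (hparts ▸ m.mem1 k) (m.lam1 k))
    (eq_componentFinset_of_mem (hparts ▸ m.mem2 k) (m.lam2 k))

theorem not_reachable_prefixGraph (k : Fin (n - 1)) :
    ¬ (prefixGraph m.treeEdge k).Reachable (m.lam k).1 (m.lam k).2 := fun h =>
  m.ne k (by rw [m.sig_eq k]; exact componentFinset_eq_iff.2 h)

theorem card_componentPartition_prefixGraph {k : ℕ} (hk : k ≤ n - 1) :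
    #(prefixGraph m.treeEdge k).componentPartition + k = n := by
  induction k with
  | zero =>
    rw [prefixGraph_zero, componentPartition_bot, card_image_of_injective _ singleton_injective,
      card_univ, Fintype.card_fin, Nat.add_zero]
  | succ k ih =>
    have hk' : k < n - 1 := hk
    have hmerge := card_componentPartition_sup_edge (m.not_reachable_prefixGraph ⟨k, hk'⟩)
    dsimp only at hmerge
    rw [prefixGraph_succ m.treeEdge hk' rfl]
    have := ih hk'.le
    omega

theorem treeEdge_injective : Function.Injective m.treeEdge := by
  refine Function.Injective.of_lt_imp_ne fun i j hij heq => m.not_reachable_prefixGraph j ?_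
  have hlam : m.lam i = m.lam j := Prod.ext
    (by rw [← inf_treeEdge, heq, inf_treeEdge]) (by rw [← sup_treeEdge, heq, sup_treeEdge])
  rw [← hlam]
  exact (prefixGraph_adj m.treeEdge hij rfl (m.ord i).ne).reachable

theorem connected (hn : 1 ≤ n) : (fromEdgeSet (Set.range m.treeEdge)).Connected := by
  rw [← prefixGraph_length]
  apply connected_of_card_componentPartition_eq_one
  have := m.card_componentPartition_prefixGraph le_rfl
  omega

def toLabeledTree (hn : 1 ≤ n) : LabeledTree n where
  edge := m.treeEdge
  inj := m.treeEdge_injective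
  nondiag i := Sym2.mk_isDiag_iff.not.2 (m.ord i).ne
  conn := m.connected hn

end MergeEdgeSeq

namespace LabeledTree

variable {n : ℕ} (T : LabeledTree n)

theorem isTree : (fromEdgeSet (Set.range T.edge)).IsTree := by
  have : Nonempty (Fin n) := T.conn.nonempty
  have hedges : (fromEdgeSet (Set.range T.edge)).edgeSet = Set.range T.edge := by
    rw [edgeSet_fromEdgeSet, sdiff_eq_left, Set.disjoint_left]
    rintro _ ⟨i, rfl⟩
    exact T.nondiag i
  rw [isTree_iff_connected_and_card, hedges, Nat.card_range_of_injective T.inj]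
  refine ⟨T.conn, ?_⟩
  simp only [Nat.card_eq_fintype_card, Fintype.card_fin]
  have := Fin.pos_iff_nonempty.2 this
  omega

theorem not_reachable_prefixGraph (i : Fin (n - 1)) :
    ¬ (prefixGraph T.edge i).Reachable (T.edge i).inf (T.edge i).sup :=
  not_reachable_prefixGraph_of_isAcyclic T.inj T.isTree.isAcyclic (Sym2.mk_inf_sup _).symm
    (Sym2.inf_lt_sup_of_not_isDiag (T.nondiag i)).ne

noncomputable def sig (k : Fin (n - 1)) : Finset (Fin n) × Finset (Fin n) :=
  ((prefixGraph T.edge k).componentFinset (T.edge k).inf,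
    (prefixGraph T.edge k).componentFinset (T.edge k).sup)

theorem mergeParts_sig {k : ℕ} (hk : k ≤ n - 1) :
    mergeParts n T.sig k = (prefixGraph T.edge k).componentPartition := by
  induction k with
  | zero => rw [prefixGraph_zero, componentPartition_bot]; rfl
  | succ k ih =>
    have hk' : k < n - 1 := hk
    rw [prefixGraph_succ T.edge hk' (Sym2.mk_inf_sup _).symm]
    exact mergeParts_succ_eq_componentPartition hk' (ih hk'.le) rfl rfl

noncomputable def toMergeEdgeSeq : MergeEdgeSeq n where
  sig := T.sig
  lam k := ((T.edge k).inf, (T.edge k).sup)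
  mem1 k := T.mergeParts_sig k.isLt.le ▸ componentFinset_mem_componentPartition _
  mem2 k := T.mergeParts_sig k.isLt.le ▸ componentFinset_mem_componentPartition _
  ne k h := T.not_reachable_prefixGraph k (componentFinset_eq_iff.1 h)
  lam1 _ := self_mem_componentFinset _
  lam2 _ := self_mem_componentFinset _
  ord k := Sym2.inf_lt_sup_of_not_isDiag (T.nondiag k)

end LabeledTree

noncomputable def MergeEdgeSeq.equivLabeledTree {n : ℕ} (hn : 1 ≤ n) :
    MergeEdgeSeq n ≃ LabeledTree n where
  toFun m := m.toLabeledTree hn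
  invFun T := T.toMergeEdgeSeq
  left_inv m := by
    ext k : 2
    · rw [m.sig_eq k]
      exact Prod.ext (congrArg (prefixGraph m.treeEdge k).componentFinset (m.inf_treeEdge k))
        (congrArg (prefixGraph m.treeEdge k).componentFinset (m.sup_treeEdge k))
    · exact Prod.ext (m.inf_treeEdge k) (m.sup_treeEdge k)
  right_inv T := LabeledTree.ext (funext fun k => Sym2.mk_inf_sup (T.edge k))

/-- The bijection between merge sequences with distinguished inter-block edges and
edge-labeled trees on `[n]`: it sends such a pair to the labeled tree whose edge with
label `k` is `λ_k = {x, y}`. -/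
theorem stmt10 (n : ℕ) (hn : 1 ≤ n) :
    ∃ e : MergeEdgeSeq n ≃ LabeledTree n,
      ∀ (m : MergeEdgeSeq n) (k : Fin (n - 1)),
        (e m).edge k = s((m.lam k).1, (m.lam k).2) :=
  ⟨MergeEdgeSeq.equivLabeledTree hn, fun _ _ => rfl⟩
end

section
/- Let η : [0,∞) → [0,∞) be monotone decreasing with ∫_{ℝ^d} η(|x|) dx < ∞. Then for any a > 0 and any finite configuration x_1, ..., x_n ∈ ℝ^d with |x_i| > a for all i and pairwise distances |x_i − x_j| > a, one has Σ_{i=1}^n η(|x_i|) ≤ (4d)^{d/2} a^{−d} ∫_{ℝ^d} η(|x|) dx. -/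
/-!
Let `z_i` be `x_i` moved a distance `a / 4` towards the origin, and `Q_i` the cube centred at
`z_i` of side `a / (2√d)`, hence of half-diagonal `a / 4`. Every point of `Q_i` is within `a / 2`
of `x_i`, so the cubes are pairwise disjoint, and no farther from the origin than `x_i`, so
`η(|x_i|) |Q_i| ≤ ∫_{Q_i} η(|y|) dy` because `η` is decreasing. Summing over `i` gives
`(a / (2√d))^d ∑ η(|x_i|) ≤ ∫ η(|y|) dy`, and `(2√d / a)^d = (4d)^{d/2} a^{-d}`.
-/

open MeasureTheory Metric Set Function

theorem sum_mul_measureReal_le_integral_of_pairwiseDisjoint {α ι : Type*} [MeasurableSpace α]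
    [Fintype ι] {μ : Measure α} {f : α → ℝ} (hf₀ : 0 ≤ᵐ[μ] f) (hf : Integrable f μ)
    {Q : ι → Set α} (hQ : ∀ i, MeasurableSet (Q i)) (hQ_fin : ∀ i, μ (Q i) ≠ ⊤)
    (hdisj : Pairwise (Disjoint on Q)) {c : ι → ℝ} (hc : ∀ i, ∀ y ∈ Q i, c i ≤ f y) :
    ∑ i, c i * μ.real (Q i) ≤ ∫ y, f y ∂μ :=
  calc ∑ i, c i * μ.real (Q i)
      ≤ ∑ i, ∫ y in Q i, f y ∂μ := Finset.sum_le_sum fun i _ => by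
        simpa [smul_eq_mul, mul_comm] using
          setIntegral_ge_of_const_le (hQ i) (hQ_fin i) (hc i) hf.integrableOn
    _ = ∫ y in ⋃ i, Q i, f y ∂μ := (integral_iUnion_fintype hQ hdisj fun _ => hf.integrableOn).symm
    _ ≤ ∫ y, f y ∂μ := setIntegral_le_integral hf hf₀

theorem EuclideanSpace.norm_le_sqrt_card_mul_norm_ofLp {ι : Type*} [Fintype ι]
    (x : EuclideanSpace ℝ ι) : ‖x‖ ≤ √(Fintype.card ι) * ‖WithLp.ofLp x‖ :=
  calc ‖x‖ = √(∑ k, ‖x k‖ ^ 2) := EuclideanSpace.norm_eq x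
    _ ≤ √(∑ _k : ι, ‖WithLp.ofLp x‖ ^ 2) := by
      gcongr with k
      exact norm_le_pi_norm (WithLp.ofLp x) k
    _ = √(Fintype.card ι) * ‖WithLp.ofLp x‖ := by
      simp only [Finset.sum_const, Finset.card_univ, nsmul_eq_mul, Nat.cast_nonneg,
        Real.sqrt_mul, Real.sqrt_sq (norm_nonneg _)]

def euclideanCube {ι : Type*} [Fintype ι] (z : EuclideanSpace ℝ ι) (s : ℝ) :
    Set (EuclideanSpace ℝ ι) :=
  WithLp.ofLp ⁻¹' closedBall (WithLp.ofLp z) s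

section euclideanCube

variable {ι : Type*} [Fintype ι]

theorem measurableSet_euclideanCube (z : EuclideanSpace ℝ ι) (s : ℝ) :
    MeasurableSet (euclideanCube z s) :=
  measurableSet_closedBall.preimage (PiLp.volume_preserving_ofLp ι).measurable

theorem volume_euclideanCube (z : EuclideanSpace ℝ ι) {s : ℝ} (hs : 0 ≤ s) :
    volume (euclideanCube z s) = ENNReal.ofReal ((2 * s) ^ Fintype.card ι) := by
  rw [euclideanCube, (PiLp.volume_preserving_ofLp ι).measure_preimage
    measurableSet_closedBall.nullMeasurableSet, Real.volume_pi_closedBall _ hs]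

theorem euclideanCube_subset_closedBall (z : EuclideanSpace ℝ ι) (s : ℝ) :
    euclideanCube z s ⊆ closedBall z (√(Fintype.card ι) * s) := by
  intro y hy
  rw [mem_closedBall, dist_eq_norm]
  calc ‖y - z‖ ≤ √(Fintype.card ι) * ‖WithLp.ofLp (y - z)‖ :=
        EuclideanSpace.norm_le_sqrt_card_mul_norm_ofLp _
    _ ≤ √(Fintype.card ι) * s := by
      gcongr
      simpa [euclideanCube, dist_eq_norm] using hy

end euclideanCube

/-- The centre is `x` pushed towards the origin by `r`. -/
theorem exists_closedBall_subset_closedBall_zero_inter {E : Type*} [NormedAddCommGroup E]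
    [NormedSpace ℝ E] (x : E) {r : ℝ} (hr : 0 ≤ r) (hrx : r ≤ ‖x‖) :
    ∃ z, closedBall z r ⊆ closedBall 0 ‖x‖ ∩ closedBall x (2 * r) := by
  rcases eq_or_ne x 0 with rfl | hx
  · obtain rfl : r = 0 := le_antisymm (by simpa using hrx) hr
    simp
  have hx' : 0 < ‖x‖ := norm_pos_iff.2 hx
  refine ⟨(1 - r / ‖x‖) • x, subset_inter (closedBall_subset_closedBall' ?_)
    (closedBall_subset_closedBall' ?_)⟩
  · have : 0 ≤ 1 - r / ‖x‖ := sub_nonneg.2 (div_le_one_of_le₀ hrx hx'.le)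
    rw [dist_zero_right, norm_smul, Real.norm_of_nonneg this]
    field_simp
    linarith
  · rw [dist_eq_norm, show (1 - r / ‖x‖) • x - x = -((r / ‖x‖) • x) by module, norm_neg,
      norm_smul, Real.norm_of_nonneg (by positivity)]
    field_simp
    linarith

theorem sum_mul_le_integral_of_separated {ι κ : Type*} [Fintype ι] [Fintype κ] {η : ℝ → ℝ}
    (hpos : ∀ r, 0 ≤ η r) (hmono : AntitoneOn η (Ici 0))
    (hint : Integrable (fun y : EuclideanSpace ℝ ι => η ‖y‖)) {a : ℝ} (ha : 0 ≤ a)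
    {x : κ → EuclideanSpace ℝ ι} (hfar : ∀ i, a ≤ ‖x i‖)
    (hsep : ∀ i j, i ≠ j → a < dist (x i) (x j)) :
    (∑ i, η ‖x i‖) * (a / (2 * √(Fintype.card ι))) ^ Fintype.card ι ≤
      ∫ y : EuclideanSpace ℝ ι, η ‖y‖ := by
  set s := a / (4 * √(Fintype.card ι))
  have hs : 0 ≤ s := by positivity
  choose z hz using fun i => exists_closedBall_subset_closedBall_zero_inter (x i)
    (by positivity : 0 ≤ a / 4) (by linarith [hfar i])
  have hcube : ∀ i, euclideanCube (z i) s ⊆ closedBall 0 ‖x i‖ ∩ closedBall (x i) (a / 2) := by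
    intro i
    have hdiag : √(Fintype.card ι) * s ≤ a / 4 := by
      calc √(Fintype.card ι) * s = a / 4 * (√(Fintype.card ι) / √(Fintype.card ι)) := by ring
        _ ≤ a / 4 := mul_le_of_le_one_right (by positivity) (div_self_le_one _)
    calc euclideanCube (z i) s ⊆ closedBall (z i) (a / 4) :=
          (euclideanCube_subset_closedBall _ _).trans (closedBall_subset_closedBall hdiag)
      _ ⊆ _ := by simpa only [show 2 * (a / 4) = a / 2 by ring] using hz i
  have hvol : ∀ i, volume.real (euclideanCube (z i) s) =
      (a / (2 * √(Fintype.card ι))) ^ Fintype.card ι := by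
    intro i
    rw [measureReal_def, volume_euclideanCube _ hs, ENNReal.toReal_ofReal (by positivity)]
    congr 1
    ring
  have key := sum_mul_measureReal_le_integral_of_pairwiseDisjoint (ae_of_all _ fun y => hpos _)
    hint (fun i => measurableSet_euclideanCube (z i) s)
    (fun i => by simp [volume_euclideanCube _ hs])
    (fun i j hij => ((closedBall_disjoint_closedBall (by linarith [hsep i j hij])).mono
      ((hcube i).trans inter_subset_right) ((hcube j).trans inter_subset_right)))
    (c := fun i => η ‖x i‖) (fun i y hy => hmono (norm_nonneg y) (norm_nonneg (x i))
      (by simpa using ((hcube i) hy).1))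
  simpa only [hvol, Finset.sum_mul] using key

theorem four_mul_rpow_div_two_eq_two_mul_sqrt_pow (d : ℕ) :
    (4 * (d : ℝ)) ^ ((d : ℝ) / 2) = (2 * √d) ^ d := by
  rw [Real.rpow_div_two_eq_sqrt _ (by positivity), Real.rpow_natCast,
    Real.sqrt_mul' _ (Nat.cast_nonneg _), show (4 : ℝ) = 2 ^ 2 by norm_num,
    Real.sqrt_sq zero_le_two]

/-- The cube-packing lemma: if `η ≥ 0` is decreasing on `[0,∞)` with
`∫_{ℝ^d} η(|x|)dx < ∞`, then for any finite configuration with all points at distance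
`> a` from the origin and pairwise distances `> a`,
`∑_i η(|x_i|) ≤ (4d)^{d/2} a^{−d} ∫_{ℝ^d} η(|x|)dx`. -/
theorem stmt15 (d : ℕ) (hd : 0 < d) (η : ℝ → ℝ) (hpos : ∀ r, 0 ≤ η r)
    (hmono : AntitoneOn η (Set.Ici 0))
    (hint : MeasureTheory.Integrable (fun x : EuclideanSpace ℝ (Fin d) => η ‖x‖))
    (a : ℝ) (ha : 0 < a) (m : ℕ) (x : Fin m → EuclideanSpace ℝ (Fin d))
    (hfar : ∀ i, a < ‖x i‖) (hsep : ∀ i j, i ≠ j → a < dist (x i) (x j)) :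
    (∑ i, η ‖x i‖) ≤
      ((4 * (d : ℝ)) ^ ((d : ℝ) / 2) / a ^ d) *
        ∫ y : EuclideanSpace ℝ (Fin d), η ‖y‖ := by
  have key := sum_mul_le_integral_of_separated hpos hmono hint ha.le (fun i => (hfar i).le) hsep
  rw [Fintype.card_fin] at key
  have hside : 0 < (a / (2 * √d)) ^ d := by
    have : 0 < √(d : ℝ) := Real.sqrt_pos.2 (Nat.cast_pos.2 hd)
    positivity
  rw [four_mul_rpow_div_two_eq_two_mul_sqrt_pow, ← div_pow, ← inv_div, inv_pow, inv_mul_eq_div,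
    le_div_iff₀ hside]
  exact key
end
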